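/- arXiv:2008.02721 — 5 statements merged into one kernel-verified Lean document; each statement's English description precedes it below -/
import Mathlib

section
/- Let m ∈ {1,…,n} and let W be any colored word on the set {1,…,n}∖{m}. Then for every h ∈ {0,…,r−1} and every q ∈ ℂ, ∑_{π ∈ G_{r,n}(W)} χ_{1,h}(π) q^{fmaj(π)} = χ_{1,h}(W) · q^{fmaj(W)} · [n·r]_{ζ^h q}. -/
open Finset

open scoped Classical

/-- `Flt x y` means `x <_F y` in the order on colored integers:
`(a,s) <_F (b,t)` iff `s > t`, or `s = t` and `a < b`. -/
def Flt (x y : ℕ × ℕ) : Prop := y.2 < x.2 ∨ (x.2 = y.2 ∧ x.1 < y.1)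

instance (x y : ℕ × ℕ) : Decidable (Flt x y) := by unfold Flt; infer_instance

/-- Inversion number of a list of naturals. -/
def invNum (l : List ℕ) : ℕ :=
  ∑ i ∈ Finset.range l.length, ∑ j ∈ Finset.range l.length,
    if i < j ∧ l.getD j 0 < l.getD i 0 then 1 else 0

/-- Sum of the colors of a colored word. -/
def colSum (l : List (ℕ × ℕ)) : ℕ := (l.map Prod.snd).sum

/-- The major index `maj_F` of a colored word: the sum of the
(1-indexed) positions `i` with `l_i >_F l_{i+1}`. -/
def majF (l : List (ℕ × ℕ)) : ℕ :=
  ∑ i ∈ Finset.range (l.length - 1),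
    if Flt (l.getD (i + 1) (0, 0)) (l.getD i (0, 0)) then i + 1 else 0

/-- The flag major index `fmaj = r·maj_F + col`. -/
def fmaj (r : ℕ) (l : List (ℕ × ℕ)) : ℕ := r * majF l + colSum l

/-- The list of absolute values of a colored word. -/
def absList (l : List (ℕ × ℕ)) : List ℕ := l.map Prod.fst

/-- The one-dimensional character value `χ_{ε,h}` of a colored word:
`ε^{inv(|W|)} · ζ^{h·col(W)}`. -/
noncomputable def chi (ε ζ : ℂ) (h : ℕ) (l : List (ℕ × ℕ)) : ℂ :=
  ε ^ invNum (absList l) * ζ ^ (h * colSum l)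

/-- `[m]_x = 1 + x + ⋯ + x^{m-1}`. -/
noncomputable def qnum (m : ℕ) (x : ℂ) : ℂ := ∑ i ∈ Finset.range m, x ^ i

/-- Colored permutations in `G_{r,n}`: a permutation of `Fin n` together with
a color in `Fin r` at each position. -/
abbrev GP (r n : ℕ) := Equiv.Perm (Fin n) × (Fin n → Fin r)

/-- The window notation of a colored permutation: the colored word whose `i`-th
entry is the value `π.1 i` (shifted to lie in `{1,…,n}`) with color `π.2 i`. -/
def window {r n : ℕ} (π : GP r n) : List (ℕ × ℕ) :=
  (List.finRange n).map fun i => ((π.1 i : ℕ) + 1, (π.2 i : ℕ))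

/-- `W` is a colored word on the finite set `A`: its absolute values are exactly
the elements of `A`, each used once, and all colors are in `{0,…,r-1}`. -/
def IsColoredWordOn (r : ℕ) (A : Finset ℕ) (W : List (ℕ × ℕ)) : Prop :=
  (W.map Prod.fst).Nodup ∧ (W.map Prod.fst).toFinset = A ∧ ∀ p ∈ W, p.2 < r

/-! A colored permutation contains `W` exactly when its window is `W` with the letter `m`, in some
color `c < r`, inserted at some position `j < n`, and different pairs `(j, c)` give different
permutations. Inserting a letter absent from a word of length `ℓ` at the positions `0, …, ℓ`
raises `maj_F` by `0, 1, …, ℓ` in some order, so the positions contribute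
`[n]_{q^r} · q^{r·maj_F W}`, while the color adds `c` to `col`. As `(ζ^h q)^r = q^r`, the
remaining sum `∑_{c < r} (ζ^h q)^c · [n]_{(ζ^h q)^r}` is `[n r]_{ζ^h q}`. -/

namespace List

theorem insertIdx_append_of_le_length {α : Type*} {l : List α} {j : ℕ} (hj : j ≤ l.length)
    (a : α) (s : List α) : (l ++ s).insertIdx j a = l.insertIdx j a ++ s := by
  induction l generalizing j with
  | nil => simp_all
  | cons x l ih =>
    cases j with
    | zero => simp
    | succ j => simp [insertIdx_succ_cons, ih (by simpa using hj)]

theorem Sublist.exists_eq_insertIdx {α : Type*} {l L : List α} (h : l.Sublist L)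
    (hlen : L.length = l.length + 1) : ∃ j ≤ l.length, ∃ a, L = l.insertIdx j a := by
  induction h with
  | slnil => simp at hlen
  | @cons l₁ l₂ a h _ =>
    refine ⟨0, Nat.zero_le _, a, ?_⟩
    rw [insertIdx_zero, h.eq_of_length (by simpa using hlen.symm)]
  | cons_cons a _ ih =>
    obtain ⟨j, hj, b, rfl⟩ := ih (by simpa using hlen)
    exact ⟨j + 1, by simpa using hj, b, by rw [insertIdx_succ_cons]⟩

theorem insertIdx_mk_inj {α β : Type*} {W : List (α × β)} {x : α} (hx : x ∉ W.map Prod.fst)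
    {j j' : ℕ} (hj : j ≤ W.length) (hj' : j' ≤ W.length) {c c' : β} :
    W.insertIdx j (x, c) = W.insertIdx j' (x, c') ↔ j = j' ∧ c = c' := by
  refine ⟨fun h => ?_, by rintro ⟨rfl, rfl⟩; rfl⟩
  have hjj' : j = j' := by
    refine injOn_insertIdx_index_of_notMem _ x hx (by simpa using hj) (by simpa using hj') ?_
    simpa [map_insertIdx] using congrArg (map Prod.fst) h
  subst hjj'
  have hc := congrArg (·[j]?) h
  simp only [getElem?_insertIdx_self, hj, if_true, Option.some.injEq, Prod.mk.injEq,
    true_and] at hc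
  exact ⟨rfl, hc⟩

end List

theorem majF_append_singleton (l : List (ℕ × ℕ)) (a : ℕ × ℕ) :
    majF (l ++ [a]) = majF l + if Flt a (l.getD (l.length - 1) (0, 0)) then l.length else 0 := by
  rcases l.eq_nil_or_concat' with rfl | ⟨l', b, rfl⟩
  · simp [majF]
  · have hlen : (l' ++ [b]).length = l'.length + 1 := by simp
    unfold majF
    rw [List.length_append, List.length_singleton, Nat.add_sub_cancel, hlen, Nat.add_sub_cancel,
      Finset.sum_range_succ]
    congr 1
    · refine Finset.sum_congr rfl fun i hi => ?_
      rw [Finset.mem_range] at hi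
      rw [List.getD_append (l' ++ [b]) [a] _ i (by simp; omega),
        List.getD_append (l' ++ [b]) [a] _ (i + 1) (by simp; omega)]
    · rw [List.getD_append_right _ _ _ _ (by simp), List.getD_append _ _ _ _ (by simp)]
      simp

theorem majF_insertIdx_append_singleton {W : List (ℕ × ℕ)} {j : ℕ} (hj : j < W.length)
    (a w : ℕ × ℕ) : majF ((W ++ [w]).insertIdx j a) = majF (W.insertIdx j a)
      + if Flt w (W.getD (W.length - 1) (0, 0)) then W.length + 1 else 0 := by
  have hlen : (W.insertIdx j a).length = W.length + 1 := List.length_insertIdx_of_le_length hj.le a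
  have hlast : (W.insertIdx j a).getD W.length (0, 0) = W.getD (W.length - 1) (0, 0) := by
    rw [List.getD_eq_getElem _ _ (by omega), List.getElem_insertIdx_of_gt hj,
      ← List.getD_eq_getElem]
  rw [List.insertIdx_append_of_le_length hj.le, majF_append_singleton, hlen, Nat.add_sub_cancel,
    hlast]

theorem sum_pow_majF_insertIdx (x : ℂ) (a : ℕ × ℕ) (W : List (ℕ × ℕ))
    (ha : a.1 ∉ W.map Prod.fst) :
    ∑ j ∈ range (W.length + 1), x ^ majF (W.insertIdx j a)
      = qnum (W.length + 1) x * x ^ majF W := by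
  induction W using List.reverseRecOn with
  | nil => simp [majF, qnum]
  | append_singleton W w ih =>
    have haW : a.1 ∉ W.map Prod.fst := fun h => ha (by simp_all)
    have haw : a.1 ≠ w.1 := fun h => ha (by simp [h])
    set ℓ := W.length with hℓ
    set L := W.getD (ℓ - 1) (0, 0) with hL
    have hlow (j : ℕ) (hj : j ∈ range ℓ) : x ^ majF ((W ++ [w]).insertIdx j a)
        = x ^ majF (W.insertIdx j a) * x ^ if Flt w L then ℓ + 1 else 0 := by
      rw [majF_insertIdx_append_singleton (mem_range.mp hj), pow_add]
    have hmid : majF ((W ++ [w]).insertIdx ℓ a)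
        = majF W + (if Flt a L then ℓ else 0) + if Flt w a then ℓ + 1 else 0 := by
      rw [List.insertIdx_append_of_le_length le_rfl, List.insertIdx_length_self,
        majF_append_singleton, majF_append_singleton]
      simp [ℓ, L]
    have htop : majF ((W ++ [w]).insertIdx (ℓ + 1) a)
        = majF W + (if Flt w L then ℓ else 0) + if Flt a w then ℓ + 1 else 0 := by
      rw [show ℓ + 1 = (W ++ [w]).length by simp [ℓ], List.insertIdx_length_self,
        majF_append_singleton, majF_append_singleton]
      simp [ℓ, L]
    have hS := ih haW
    rw [Finset.sum_range_succ, List.insertIdx_length_self, majF_append_singleton] at hS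
    rw [show (W ++ [w]).length = ℓ + 1 by simp [ℓ], Finset.sum_range_succ,
      Finset.sum_range_succ, Finset.sum_congr rfl hlow, ← Finset.sum_mul, hmid, htop,
      majF_append_singleton]
    rw [← hℓ, ← hL] at hS ⊢
    generalize ∑ j ∈ range ℓ, x ^ majF (W.insertIdx j a) = S at hS ⊢
    have hQ : qnum (ℓ + 1 + 1) x = x * qnum (ℓ + 1) x + 1 := geom_sum_succ
    have hQ' : qnum (ℓ + 1 + 1) x = qnum (ℓ + 1) x + x ^ (ℓ + 1) := Finset.sum_range_succ _ _
    rcases (show Flt w a ∨ Flt a w by unfold Flt; omega) with hwa | haw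
    · have hnaw : ¬ Flt a w := by unfold Flt at *; omega
      by_cases hd : Flt w L
      · simp only [hd, hwa, hnaw, ↓reduceIte]
        rw [hQ]
        linear_combination x ^ (ℓ + 1) * hS
      · have hnaL : ¬ Flt a L := by unfold Flt at *; omega
        simp only [hd, hwa, hnaw, hnaL, ↓reduceIte] at hS ⊢
        rw [hQ']
        linear_combination hS
    · have hnwa : ¬ Flt w a := by unfold Flt at *; omega
      by_cases hd : Flt w L
      · have haL : Flt a L := by unfold Flt at *; omega
        simp only [hd, haw, hnwa, haL, ↓reduceIte] at hS ⊢
        rw [hQ]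
        linear_combination x ^ (ℓ + 1) * hS
      · simp only [hd, haw, hnwa, ↓reduceIte]
        rw [hQ']
        linear_combination hS

section ColoredWords

variable {r n : ℕ} {A : Finset ℕ} {W : List (ℕ × ℕ)}

theorem IsColoredWordOn.length_eq (hW : IsColoredWordOn r A W) : W.length = A.card := by
  rw [← hW.2.1, List.toFinset_card_of_nodup hW.1, List.length_map]

theorem IsColoredWordOn.insertIdx (hW : IsColoredWordOn r A W) {a : ℕ × ℕ} (ha : a.1 ∉ A)
    (hc : a.2 < r) {j : ℕ} (hj : j ≤ W.length) :
    IsColoredWordOn r (insert a.1 A) (W.insertIdx j a) := by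
  have hperm := List.perm_insertIdx a W hj
  refine ⟨?_, ?_, fun p hp => ?_⟩
  · rw [(hperm.map Prod.fst).nodup_iff, List.map_cons, List.nodup_cons, ← List.mem_toFinset,
      hW.2.1]
    exact ⟨ha, hW.1⟩
  · rw [List.toFinset_eq_of_perm _ _ (hperm.map Prod.fst), List.map_cons, List.toFinset_cons,
      hW.2.1]
  · rcases List.mem_cons.mp (hperm.mem_iff.mp hp) with rfl | hp
    · exact hc
    · exact hW.2.2 p hp

theorem IsColoredWordOn.fst_mem (hW : IsColoredWordOn r A W) {p : ℕ × ℕ} (hp : p ∈ W) :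
    p.1 ∈ A :=
  hW.2.1 ▸ List.mem_toFinset.mpr (List.mem_map_of_mem hp)

theorem IsColoredWordOn.fst_notMem (hW : IsColoredWordOn r A W) {x : ℕ} (hx : x ∉ A) :
    x ∉ W.map Prod.fst := by
  rwa [← List.mem_toFinset, hW.2.1]

theorem IsColoredWordOn.length_add_one {m : ℕ} (hW : IsColoredWordOn r ((Icc 1 n).erase m) W)
    (hm : m ∈ Icc 1 n) : W.length + 1 = n := by
  have := mem_Icc.mp hm
  rw [hW.length_eq, card_erase_of_mem hm, Nat.card_Icc]
  omega

theorem IsColoredWordOn.exists_eq_insertIdx {U : List (ℕ × ℕ)} {m : ℕ}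
    (hU : IsColoredWordOn r A U) (hW : IsColoredWordOn r (A.erase m) W) (hm : m ∈ A)
    (hWU : W.Sublist U) : ∃ j ≤ W.length, ∃ c < r, U = W.insertIdx j (m, c) := by
  obtain ⟨j, hj, a, rfl⟩ := hWU.exists_eq_insertIdx
    (by rw [hU.length_eq, hW.length_eq, card_erase_add_one hm])
  have ham : a.1 = m := by
    have hm' := hU.2.1 ▸ hm
    rw [List.mem_toFinset, ((List.perm_insertIdx a W hj).map Prod.fst).mem_iff, List.map_cons,
      List.mem_cons] at hm'
    exact (hm'.resolve_right (hW.fst_notMem (notMem_erase m _))).symm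
  exact ⟨j, hj, a.2, hU.2.2 a ((List.mem_insertIdx hj).mpr (Or.inl rfl)), by rw [← ham]⟩

theorem isColoredWordOn_window (π : GP r n) : IsColoredWordOn r (Icc 1 n) (window π) := by
  have hfst : (window π).map Prod.fst = (List.finRange n).map fun i => (π.1 i : ℕ) + 1 := by
    simp [window]
  refine ⟨?_, ?_, ?_⟩
  · rw [hfst]
    exact (List.nodup_finRange n).map fun i j h => π.1.injective (Fin.ext (by simpa using h))
  · ext x
    simp only [hfst, List.mem_toFinset, List.mem_map, List.mem_finRange, true_and, mem_Icc]
    constructor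
    · rintro ⟨i, rfl⟩
      exact ⟨by omega, (π.1 i).isLt⟩
    · rintro ⟨h1, h2⟩
      exact ⟨π.1.symm ⟨x - 1, by omega⟩, by simp; omega⟩
  · simp [window]

theorem window_injective : Function.Injective (window : GP r n → List (ℕ × ℕ)) := by
  intro π π' h
  simp only [window, List.map_inj_left, List.mem_finRange, forall_const, Prod.mk.injEq,
    Nat.add_right_cancel_iff] at h
  exact Prod.ext (Equiv.ext fun i => Fin.ext (h i).1) (funext fun i => Fin.ext (h i).2)

noncomputable def ofWindow (U : List (ℕ × ℕ)) (hU : IsColoredWordOn r (Icc 1 n) U) : GP r n :=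
  have hlen : U.length = n := by simp [hU.length_eq]
  have hmem (i : Fin n) : 1 ≤ U[(i : ℕ)].1 ∧ U[(i : ℕ)].1 ≤ n :=
    mem_Icc.mp (hU.fst_mem (List.getElem_mem _))
  (Equiv.ofBijective (fun i => ⟨U[(i : ℕ)].1 - 1, by have := hmem i; omega⟩)
    (Finite.injective_iff_bijective.mp fun i j hij => by
      have hi := hmem i
      have hj := hmem j
      have hij' : (U.map Prod.fst)[(i : ℕ)]'(by simp; omega)
          = (U.map Prod.fst)[(j : ℕ)]'(by simp; omega) := by
        simp only [List.getElem_map]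
        have := congrArg Fin.val hij
        simp only at this
        omega
      exact Fin.ext ((hU.1.getElem_inj_iff).mp hij')),
   fun i => ⟨U[(i : ℕ)].2, hU.2.2 _ (List.getElem_mem _)⟩)

theorem window_ofWindow (U : List (ℕ × ℕ)) (hU : IsColoredWordOn r (Icc 1 n) U) :
    window (ofWindow U hU) = U := by
  refine List.ext_getElem (by simp [window, hU.length_eq]) fun i hi hi' => ?_
  have h1 : 1 ≤ U[i].1 := (mem_Icc.mp (hU.fst_mem (List.getElem_mem _))).1
  simp only [window, ofWindow, List.getElem_map, List.getElem_finRange, Equiv.ofBijective_apply]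
  ext
  · simp only [Fin.cast_mk]
    omega
  · rfl

theorem sum_filter_sublist_window {M : Type*} [AddCommMonoid M]
    (f : List (ℕ × ℕ) → M) {m : ℕ} (hm : m ∈ Icc 1 n)
    (hW : IsColoredWordOn r ((Icc 1 n).erase m) W) :
    ∑ π ∈ univ.filter (fun π : GP r n => W.Sublist (window π)), f (window π)
      = ∑ p ∈ range n ×ˢ range r, f (W.insertIdx p.1 (m, p.2)) := by
  have hlen := hW.length_add_one hm
  have hmW := hW.fst_notMem (notMem_erase m _)
  have hword (p : ℕ × ℕ) (hp : p ∈ range n ×ˢ range r) :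
      IsColoredWordOn r (Icc 1 n) (W.insertIdx p.1 (m, p.2)) := by
    simp only [mem_product, mem_range] at hp
    simpa [insert_erase hm] using
      hW.insertIdx (a := (m, p.2)) (notMem_erase m _) hp.2 (by omega)
  refine (sum_bij (fun p hp => ofWindow _ (hword p hp)) ?_ ?_ ?_ ?_).symm
  · intro p _
    simp [window_ofWindow, List.sublist_insertIdx]
  · intro p hp p' hp' h
    simp only [mem_product, mem_range] at hp hp'
    have hins := congrArg window h
    rw [window_ofWindow, window_ofWindow, List.insertIdx_mk_inj hmW (by omega) (by omega)] at hins
    exact Prod.ext hins.1 hins.2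
  · intro π hπ
    obtain ⟨j, hj, c, hc, hπW⟩ :=
      (isColoredWordOn_window π).exists_eq_insertIdx hW hm (mem_filter.mp hπ).2
    exact ⟨(j, c), by simp; omega, window_injective (by rw [window_ofWindow, hπW])⟩
  · intro p _
    rw [window_ofWindow]

end ColoredWords

theorem colSum_insertIdx {W : List (ℕ × ℕ)} {j : ℕ} (hj : j ≤ W.length) (a : ℕ × ℕ) :
    colSum (W.insertIdx j a) = a.2 + colSum W := by
  rw [colSum, List.map_insertIdx, (List.perm_insertIdx _ _ (by simpa using hj)).sum_eq,
    List.sum_cons, colSum]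

theorem chi_one_mul_pow_fmaj (ζ q : ℂ) (r h : ℕ) (l : List (ℕ × ℕ)) :
    chi 1 ζ h l * q ^ fmaj r l = (ζ ^ h * q) ^ colSum l * (q ^ r) ^ majF l := by
  rw [chi, fmaj, one_pow, one_mul]
  ring

theorem qnum_mul_qnum_pow (y : ℂ) (r n : ℕ) : qnum r y * qnum n (y ^ r) = qnum (n * r) y := by
  induction n with
  | zero => simp [qnum]
  | succ n ih =>
    simp only [qnum] at ih ⊢
    rw [sum_range_succ, mul_add, ih, add_one_mul, sum_range_add, sum_mul]
    congr 1
    exact sum_congr rfl fun i _ => by ring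

theorem insertion_chi_one_general (r n m h : ℕ) (ζ q : ℂ)
    (hζ : IsPrimitiveRoot ζ r)
    (hm1 : 1 ≤ m) (hm2 : m ≤ n)
    (W : List (ℕ × ℕ)) (hW : IsColoredWordOn r ((Finset.Icc 1 n).erase m) W) :
    ∑ π ∈ Finset.univ.filter (fun π : GP r n => W.Sublist (window π)),
      chi 1 ζ h (window π) * q ^ fmaj r (window π)
    = chi 1 ζ h W * q ^ fmaj r W * qnum (n * r) (ζ ^ h * q) := by
  have hm : m ∈ Icc 1 n := mem_Icc.mpr ⟨hm1, hm2⟩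
  have hlen := hW.length_add_one hm
  have hmW := hW.fst_notMem (notMem_erase m _)
  have hpow : (ζ ^ h * q) ^ r = q ^ r := by
    rw [mul_pow, ← pow_mul, mul_comm h r, pow_mul, hζ.pow_eq_one, one_pow, one_mul]
  rw [sum_filter_sublist_window (fun l => chi 1 ζ h l * q ^ fmaj r l) hm hW, sum_product_right]
  calc _ = ∑ c ∈ range r, (ζ ^ h * q) ^ c * (ζ ^ h * q) ^ colSum W *
        ∑ j ∈ range (W.length + 1), (q ^ r) ^ majF (W.insertIdx j (m, c)) := by
        rw [hlen]
        refine sum_congr rfl fun c _ => ?_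
        rw [mul_sum]
        refine sum_congr rfl fun j hj => ?_
        rw [chi_one_mul_pow_fmaj, colSum_insertIdx (by simp at hj; omega), pow_add]
    _ = ∑ c ∈ range r,
          (ζ ^ h * q) ^ c * (ζ ^ h * q) ^ colSum W * (qnum n (q ^ r) * (q ^ r) ^ majF W) := by
        refine sum_congr rfl fun c _ => ?_
        rw [sum_pow_majF_insertIdx _ (m, c) W hmW, hlen]
    _ = (ζ ^ h * q) ^ colSum W * (q ^ r) ^ majF W * (qnum r (ζ ^ h * q) * qnum n (q ^ r)) := by
        rw [show qnum r (ζ ^ h * q) = ∑ c ∈ range r, (ζ ^ h * q) ^ c from rfl, sum_mul,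
          mul_sum]
        exact sum_congr rfl fun c _ => by ring
    _ = _ := by rw [← hpow, qnum_mul_qnum_pow, hpow, chi_one_mul_pow_fmaj]

/-- insertion lemma for `χ_{1,h}`: inserting the missing letter `m`. -/
theorem insertion_chi_one (r n m h : ℕ) (ζ q : ℂ)
    (hr : 1 ≤ r) (hn : 1 ≤ n) (hζ : IsPrimitiveRoot ζ r)
    (hm1 : 1 ≤ m) (hm2 : m ≤ n) (hh : h < r)
    (W : List (ℕ × ℕ)) (hW : IsColoredWordOn r ((Finset.Icc 1 n).erase m) W) :
    ∑ π ∈ Finset.univ.filter (fun π : GP r n => W.Sublist (window π)),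
      chi 1 ζ h (window π) * q ^ fmaj r (window π)
    = chi 1 ζ h W * q ^ fmaj r W * qnum (n * r) (ζ ^ h * q) :=
  insertion_chi_one_general r n m h ζ q hζ hm1 hm2 W hW
end

section
/- Let 1 ≤ k ≤ n−1 and let W be the colored word (n−k+1, n−k+2, …, n) on the set {n−k+1,…,n} with all colors 0. For t ∈ {0,…,r−1}, let T(W; (n−k)^t) be the set of k+1 colored words on {n−k,…,n} obtained from W by inserting the colored letter (n−k)^t at one of the k+1 possible positions. Then for every h ∈ {0,…,r−1} and every q ∈ ℂ, ∑_{t=0}^{r−1} ∑_{W' ∈ T(W; (n−k)^t)} χ_{−1,h}(W') q^{fmaj(W')} = [k+1]_{−q^r} · [r]_{ζ^h q}. -/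
open Finset

open scoped Classical

/-- The colored word obtained from `W` by inserting the block `p` at the `j`-th
space of `W` (spaces are indexed `0,1,…,W.length` from left to right). -/
def insertAt (W p : List (ℕ × ℕ)) (j : ℕ) : List (ℕ × ℕ) :=
  W.take j ++ p ++ W.drop j

/-! ### Auxiliary lemmas -/

private def myL (m k j t : ℕ) : List (ℕ × ℕ) :=
  (List.range' (m+1) j).map (fun a => (a, 0)) ++ [(m, t)] ++
    (List.range' (m+1+j) (k-j)).map (fun a => (a, 0))

lemma ins_eq (m k j t : ℕ) (hj : j ≤ k) :
    insertAt ((List.range' (m+1) k).map (fun a => (a, 0))) [(m, t)] j = myL m k j t := by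
  have h : List.range' (m+1) k = List.range' (m+1) j ++ List.range' (m+1+j) (k-j) := by
    rw [List.range'_append_1]
    congr 1
    omega
  unfold insertAt myL
  rw [h, List.map_append, List.take_left' (by simp), List.drop_left' (by simp)]

lemma myL_length (m k j t : ℕ) (hj : j ≤ k) : (myL m k j t).length = k + 1 := by
  simp [myL]; omega

lemma myL_getD (m k j t i : ℕ) (hj : j ≤ k) (hi : i ≤ k) :
    (myL m k j t).getD i (0,0)
      = if i < j then (m+1+i, 0) else if i = j then (m, t) else (m+i, 0) := by
  unfold myL
  rcases lt_trichotomy i j with hc | hc | hc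
  · rw [List.getD_append _ _ _ _ (by simp only [List.length_append, List.length_map,
        List.length_range', List.length_cons, List.length_nil]; omega),
      List.getD_append _ _ _ _ (by simp only [List.length_map, List.length_range']; omega)]
    rw [List.getD_eq_getElem _ _ (by simp only [List.length_map, List.length_range']; omega)]
    simp [hc, Nat.add_assoc]
  · subst hc
    rw [List.getD_append _ _ _ _ (by simp only [List.length_append, List.length_map,
        List.length_range', List.length_cons, List.length_nil]; omega),
      List.getD_append_right _ _ _ _ (by simp only [List.length_map, List.length_range']; omega)]
    simp
  · rw [List.getD_append_right _ _ _ _ (by simp only [List.length_append, List.length_map,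
        List.length_range', List.length_cons, List.length_nil]; omega)]
    rw [List.getD_eq_getElem _ _ (by simp only [List.length_map, List.length_range',
        List.length_append, List.length_cons, List.length_nil]; omega)]
    simp only [List.getElem_map, List.getElem_range']
    simp only [List.length_append, List.length_map, List.length_range', List.length_cons,
      List.length_nil]
    rw [if_neg (by omega), if_neg (by omega)]
    congr 1
    omega

lemma myL_colSum (m k j t : ℕ) : colSum (myL m k j t) = t := by
  simp [myL, colSum, List.map_map, Function.comp_def]

lemma myL_abs_getD (m k j t i : ℕ) (hj : j ≤ k) (hi : i ≤ k) :
    (absList (myL m k j t)).getD i 0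
      = if i < j then m+1+i else if i = j then m else m+i := by
  have hl : (myL m k j t).length = k + 1 := myL_length m k j t hj
  have : (absList (myL m k j t)).getD i 0 = ((myL m k j t).getD i (0,0)).1 := by
    unfold absList
    rw [List.getD_eq_getElem _ _ (by simp [hl]; omega),
      List.getD_eq_getElem _ _ (by omega)]
    simp
  rw [this, myL_getD m k j t i hj hi]
  split_ifs <;> rfl

lemma myL_inv (m k j t : ℕ) (hj : j ≤ k) : invNum (absList (myL m k j t)) = j := by
  have hl : (absList (myL m k j t)).length = k + 1 := by
    unfold absList; rw [List.length_map]; exact myL_length m k j t hj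
  unfold invNum
  rw [hl]
  have step : ∀ i ∈ range (k+1), ∀ i' ∈ range (k+1),
      (if i < i' ∧ (absList (myL m k j t)).getD i' 0 < (absList (myL m k j t)).getD i 0
        then (1:ℕ) else 0) = if i' = j ∧ i < j then 1 else 0 := by
    intro i hi i' hi'
    simp only [mem_range] at hi hi'
    rw [myL_abs_getD m k j t i hj (by omega), myL_abs_getD m k j t i' hj (by omega)]
    split_ifs <;> omega
  rw [Finset.sum_congr rfl fun i hi => Finset.sum_congr rfl fun i' hi' => step i hi i' hi']
  have inner : ∀ i, ∑ i' ∈ range (k+1), (if i' = j ∧ i < j then (1:ℕ) else 0)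
      = if i < j then 1 else 0 := by
    intro i
    have : ∀ i', (if i' = j ∧ i < j then (1:ℕ) else 0)
        = if i' = j then (if i < j then 1 else 0) else 0 := by
      intro i'; split_ifs <;> tauto
    rw [Finset.sum_congr rfl fun i' _ => this i']
    rw [Finset.sum_ite_eq' (range (k+1)) j (fun _ => if i < j then (1:ℕ) else 0)]
    rw [if_pos (by simp; omega)]
  rw [Finset.sum_congr rfl fun i _ => inner i]
  rw [← Finset.sum_filter]
  have : (range (k+1)).filter (fun i => i < j) = range j := by
    ext x; simp; omega
  rw [this]
  simp

lemma myL_maj (m k j t : ℕ) (hj : j ≤ k) : majF (myL m k j t) = j := by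
  have hl : (myL m k j t).length = k + 1 := myL_length m k j t hj
  unfold majF
  rw [hl]
  simp only [Nat.add_sub_cancel]
  have step : ∀ i ∈ range k,
      (if Flt ((myL m k j t).getD (i+1) (0,0)) ((myL m k j t).getD i (0,0)) then i+1 else 0)
        = if i + 1 = j then i + 1 else 0 := by
    intro i hi
    simp only [mem_range] at hi
    have hcond : Flt ((myL m k j t).getD (i+1) (0,0)) ((myL m k j t).getD i (0,0)) ↔ i + 1 = j := by
      rw [myL_getD m k j t i hj (by omega), myL_getD m k j t (i+1) hj (by omega)]
      split_ifs <;> simp [Flt] <;> omega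
    rw [if_congr hcond rfl rfl]
  rw [Finset.sum_congr rfl step]
  rcases Nat.eq_zero_or_pos j with hj0 | hj0
  · subst hj0; simp
  · obtain ⟨jj, rfl⟩ : ∃ jj, j = jj + 1 := ⟨j-1, by omega⟩
    have h2 : ∀ i, (if i + 1 = jj + 1 then i+1 else 0) = if i = jj then i+1 else 0 := by
      intro i; split_ifs <;> omega
    rw [Finset.sum_congr rfl fun i _ => h2 i,
      Finset.sum_ite_eq' (range k) jj (fun i => i + 1), if_pos (by simp only [mem_range]; omega)]

/-- inserting `(n-k)^t` into the increasing word
`(n-k+1, …, n)` (all colors `0`), summed over all colors `t` and all `k+1`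
insertion positions. -/
theorem insertion_into_increasing_word (r n k h : ℕ) (ζ q : ℂ)
    (hr : 1 ≤ r) (hn : 1 ≤ n) (hζ : IsPrimitiveRoot ζ r)
    (hk1 : 1 ≤ k) (hk2 : k ≤ n - 1) (hh : h < r) :
    ∑ t ∈ Finset.range r, ∑ j ∈ Finset.range (k + 1),
      chi (-1) ζ h
          (insertAt ((List.range' (n - k + 1) k).map (fun a => (a, 0))) [(n - k, t)] j) *
        q ^ fmaj r
          (insertAt ((List.range' (n - k + 1) k).map (fun a => (a, 0))) [(n - k, t)] j)
    = qnum (k + 1) (-(q ^ r)) * qnum r (ζ ^ h * q) := by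
  have hterm : ∀ t ∈ range r, ∀ j ∈ range (k+1),
      chi (-1) ζ h
          (insertAt ((List.range' (n - k + 1) k).map (fun a => (a, 0))) [(n - k, t)] j) *
        q ^ fmaj r
          (insertAt ((List.range' (n - k + 1) k).map (fun a => (a, 0))) [(n - k, t)] j)
      = (-(q ^ r)) ^ j * (ζ ^ h * q) ^ t := by
    intro t ht j hj
    simp only [mem_range] at ht hj
    have hj' : j ≤ k := by omega
    rw [ins_eq (n-k) k j t hj']
    unfold chi fmaj
    rw [myL_inv (n-k) k j t hj', myL_maj (n-k) k j t hj', myL_colSum]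
    rw [pow_add]
    conv_rhs => rw [neg_pow, mul_pow, ← pow_mul, ← pow_mul]
    ring
  rw [Finset.sum_congr rfl fun t ht => Finset.sum_congr rfl fun j hj => hterm t ht j hj]
  unfold qnum
  rw [Finset.sum_mul_sum, Finset.sum_comm]
end

section
/- For every permutation w of {1,…,n}, every ε ∈ {1,−1}, every h ∈ {0,…,r−1}, and every q ∈ ℂ, ∑_{π ∈ G_{r,n}, |π| = w} χ_{ε,h}(π) q^{fmaj(π)} = ε^{inv(w)} · (ζ^h q)^{maj(w)} · ∏_{j=1}^{n} [r]_{(ζ^h q)^j}. -/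
open Finset

open scoped Classical

/-- The major index of a list of naturals: the sum of the (1-indexed) positions
`i` with `l_i > l_{i+1}`. -/
def majL (l : List ℕ) : ℕ :=
  ∑ i ∈ Finset.range (l.length - 1),
    if l.getD (i + 1) 0 < l.getD i 0 then i + 1 else 0

/-- The one-line notation of a permutation of `Fin n`, as a list of values in
`{1,…,n}`. -/
def permList {n : ℕ} (w : Equiv.Perm (Fin n)) : List ℕ :=
  (List.finRange n).map fun i => (w i : ℕ) + 1

namespace SM

variable {r n : ℕ}

/-- value of a `Fin n → Fin r` coloring at a natural index, 0 outside. -/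
def Uv (r n : ℕ) (u : Fin n → Fin r) (i : ℕ) : ℕ := if h : i < n then (u ⟨i, h⟩ : ℕ) else 0

/-- value of a permutation word at a natural index, 0 outside. -/
def Wv (n : ℕ) (w : Equiv.Perm (Fin n)) (i : ℕ) : ℕ := if h : i < n then (w ⟨i, h⟩ : ℕ) + 1 else 0

/-- the digit function -/
def sdig (r n : ℕ) (w : Equiv.Perm (Fin n)) (i c : ℕ) : ℕ :=
  if c = 0 then (if i + 1 < n ∧ Wv n w (i + 1) < Wv n w i then r else 0) else c

/-- partial-sums map on colorings -/
def Fmap (r n : ℕ) [NeZero r] (u : Fin n → Fin r) : Fin n → Fin r :=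
  fun i => ∑ j ∈ Finset.Ico (i : ℕ) n, (if h : j < n then u ⟨j, h⟩ else 0)

lemma Fmap_rec [NeZero r] (u : Fin n → Fin r) (i : Fin n) (h : (i : ℕ) + 1 < n) :
    Fmap r n u i = u i + Fmap r n u ⟨(i : ℕ) + 1, h⟩ := by
  show (∑ j ∈ Finset.Ico (i : ℕ) n, _) = _
  rw [Finset.sum_eq_sum_Ico_succ_bot i.isLt]
  simp [Fmap, i.isLt]

lemma Fmap_last [NeZero r] (u : Fin n → Fin r) (i : Fin n) (h : (i : ℕ) + 1 = n) :
    Fmap r n u i = u i := by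
  show (∑ j ∈ Finset.Ico (i : ℕ) n, _) = _
  have hs : Finset.Ico (i : ℕ) n = {(i : ℕ)} := by
    ext x
    simp only [Finset.mem_Ico, Finset.mem_singleton]
    omega
  rw [hs, Finset.sum_singleton, dif_pos i.isLt]

def Gmap (r n : ℕ) [NeZero r] (z : Fin n → Fin r) : Fin n → Fin r :=
  fun i => z i - (if h : (i : ℕ) + 1 < n then z ⟨(i : ℕ) + 1, h⟩ else 0)

lemma Gmap_Fmap [NeZero r] (u : Fin n → Fin r) : Gmap r n (Fmap r n u) = u := by
  funext i
  unfold Gmap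
  by_cases h : (i : ℕ) + 1 < n
  · rw [dif_pos h, Fmap_rec u i h, add_sub_cancel_right]
  · have hi := i.isLt
    rw [dif_neg h, sub_zero, Fmap_last u i (by omega : (i : ℕ) + 1 = n)]

lemma Fmap_bijective [NeZero r] : Function.Bijective (Fmap r n) :=
  Finite.injective_iff_bijective.mp (Function.LeftInverse.injective (g := Gmap r n) (fun u => Gmap_Fmap u))


lemma window_length (π : GP r n) : (window π).length = n := by simp [window]

lemma window_getD (π : GP r n) {i : ℕ} (h : i < n) :
    (window π).getD i (0, 0) = (Wv n π.1 i, Uv r n π.2 i) := by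
  rw [List.getD_eq_getElem _ _ (by rw [window_length]; exact h)]
  simp [window, Wv, Uv, h]

lemma absList_window (π : GP r n) : absList (window π) = permList π.1 := by
  simp [absList, window, permList, List.map_map, Function.comp]

lemma colSum_window (π : GP r n) : colSum (window π) = ∑ i ∈ range n, Uv r n π.2 i := by
  rw [colSum, window, List.map_map, ← Fin.sum_univ_def,
    ← Fin.sum_univ_eq_sum_range (fun i => Uv r n π.2 i) n]
  apply Finset.sum_congr rfl
  intro i _
  simp [Uv, Function.comp, i.isLt]

lemma majF_window (π : GP r n) :
    majF (window π) = ∑ i ∈ range (n - 1),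
      if (Uv r n π.2 i < Uv r n π.2 (i+1) ∨
          (Uv r n π.2 (i+1) = Uv r n π.2 i ∧ Wv n π.1 (i+1) < Wv n π.1 i)) then i + 1 else 0 := by
  rw [majF, window_length]
  apply Finset.sum_congr rfl
  intro i hi
  rw [Finset.mem_range] at hi
  rw [window_getD π (by omega : i < n), window_getD π (by omega : i + 1 < n)]
  simp [Flt]

lemma permList_length (w : Equiv.Perm (Fin n)) : (permList w).length = n := by simp [permList]

lemma permList_getD (w : Equiv.Perm (Fin n)) {i : ℕ} (h : i < n) :
    (permList w).getD i 0 = Wv n w i := by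
  rw [List.getD_eq_getElem _ _ (by rw [permList_length]; exact h)]
  simp [permList, Wv, h]

lemma majL_permList (w : Equiv.Perm (Fin n)) :
    majL (permList w) = ∑ i ∈ range (n - 1), if Wv n w (i+1) < Wv n w i then i + 1 else 0 := by
  rw [majL, permList_length]
  refine Finset.sum_congr rfl fun i hi => ?_
  rw [Finset.mem_range] at hi
  rw [permList_getD w (by omega : i < n), permList_getD w (by omega : i + 1 < n)]

lemma Zv_rec [NeZero r] (u : Fin n → Fin r) {i : ℕ} (h : i + 1 < n) :
    Uv r n (Fmap r n u) i = (Uv r n u i + Uv r n (Fmap r n u) (i+1)) % r := by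
  rw [Uv, dif_pos (by omega : i < n), Uv, Uv, dif_pos (by omega : i < n), dif_pos h]
  rw [Fmap_rec u ⟨i, by omega⟩ h]
  exact Fin.val_add _ _

lemma Zv_last [NeZero r] (u : Fin n → Fin r) {i : ℕ} (h : i + 1 = n) :
    Uv r n (Fmap r n u) i = Uv r n u i := by
  rw [Uv, Uv, dif_pos (by omega : i < n), dif_pos (by omega : i < n)]
  rw [Fmap_last u ⟨i, by omega⟩ h]

lemma Uv_lt [NeZero r] (u : Fin n → Fin r) (i : ℕ) : Uv r n u i < r := by
  rw [Uv]; split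
  · exact (u _).isLt
  · exact Nat.pos_of_ne_zero (NeZero.ne r)

lemma tele (f : ℕ → ℤ) (m : ℕ) :
    (∑ i ∈ range m, ((i : ℤ) + 1) * (f i - f (i+1))) + ((m : ℤ) + 1) * f m
      = ∑ i ∈ range (m+1), f i := by
  induction m with
  | zero => simp
  | succ k ih =>
    rw [Finset.sum_range_succ, Finset.sum_range_succ (f := f) (n := k+1)]
    rw [← ih]
    push_cast
    ring

lemma fmaj_Fmap [NeZero r] (hn : 1 ≤ n) (w : Equiv.Perm (Fin n)) (u : Fin n → Fin r) :
    fmaj r (window (w, Fmap r n u)) = ∑ i ∈ range n, (i + 1) * sdig r n w i (Uv r n u i) := by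
  obtain ⟨m, rfl⟩ : ∃ m, n = m + 1 := ⟨n - 1, by omega⟩
  have hr : 1 ≤ r := Nat.pos_of_ne_zero (NeZero.ne r)
  rw [fmaj, colSum_window, majF_window]
  simp only [Nat.add_sub_cancel]
  set Z : ℕ → ℕ := Uv r (m+1) (Fmap r (m+1) u) with hZ
  set U : ℕ → ℕ := Uv r (m+1) u with hU
  set W : ℕ → ℕ := Wv (m+1) w with hW
  have key : ∀ i < m, (sdig r (m+1) w i (U i) : ℤ)
      = (Z i : ℤ) - (Z (i+1) : ℤ) +
        (r : ℤ) * (if (Z i < Z (i+1) ∨ (Z (i+1) = Z i ∧ W (i+1) < W i)) then 1 else 0) := by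
    intro i hi
    have h1 : Z i = (U i + Z (i+1)) % r := Zv_rec u (by omega)
    have h2 : U i < r := Uv_lt u i
    have h3 : Z (i+1) < r := Uv_lt _ _
    have hg : i + 1 < m + 1 := by omega
    rcases Nat.lt_or_ge (U i + Z (i+1)) r with hc | hc
    · have h4 : Z i = U i + Z (i+1) := by rw [h1, Nat.mod_eq_of_lt hc]
      rw [sdig, ← hW]
      split_ifs <;> push_cast <;> omega
    · have h4 : Z i + r = U i + Z (i+1) := by
        have h5 : (U i + Z (i+1)) % r = U i + Z (i+1) - r := by
          rw [Nat.mod_eq_sub_mod hc, Nat.mod_eq_of_lt (by omega)]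
        omega
      rw [sdig, ← hW]
      split_ifs <;> push_cast <;> omega
  have keyLast : sdig r (m+1) w m (U m) = Z m := by
    have hzl : Z m = U m := Zv_last u rfl
    rw [sdig, hzl]
    have hfalse : ¬ (m + 1 < m + 1) := by omega
    simp only [hfalse, false_and, if_false]
    split_ifs with h1 <;> omega
  have main : (r : ℤ) * (∑ i ∈ range m,
        if (Z i < Z (i+1) ∨ (Z (i+1) = Z i ∧ W (i+1) < W i)) then ((i : ℤ) + 1) else 0)
      + ∑ i ∈ range (m+1), (Z i : ℤ)
      = ∑ i ∈ range (m+1), ((i : ℤ) + 1) * (sdig r (m+1) w i (U i) : ℤ) := by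
    rw [Finset.sum_range_succ (f := fun i => ((i : ℤ) + 1) * (sdig r (m+1) w i (U i) : ℤ))]
    rw [keyLast]
    have e0 : (∑ i ∈ range m, ((i : ℤ) + 1) * (sdig r (m+1) w i (U i) : ℤ))
        = ∑ i ∈ range m, (((i : ℤ) + 1) * ((Z i : ℤ) - (Z (i+1) : ℤ))
            + ((i : ℤ) + 1) * ((r : ℤ) *
              (if (Z i < Z (i+1) ∨ (Z (i+1) = Z i ∧ W (i+1) < W i)) then 1 else 0))) :=
      Finset.sum_congr rfl (fun i hi => by
        rw [key i (Finset.mem_range.mp hi)]; ring)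
    rw [e0, Finset.sum_add_distrib]
    rw [← tele (fun i => (Z i : ℤ)) m]
    rw [Finset.mul_sum]
    have e : ∀ i ∈ range m, (r : ℤ) *
        (if (Z i < Z (i+1) ∨ (Z (i+1) = Z i ∧ W (i+1) < W i)) then ((i : ℤ) + 1) else 0)
        = ((i : ℤ) + 1) * ((r : ℤ) *
          (if (Z i < Z (i+1) ∨ (Z (i+1) = Z i ∧ W (i+1) < W i)) then 1 else 0)) := by
      intro i _
      split_ifs <;> ring
    rw [Finset.sum_congr rfl e]
    ring
  zify
  push_cast at main ⊢
  convert main using 2 <;> norm_num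

lemma factor0 (x : ℂ) (mm r : ℕ) :
    ∑ c ∈ range r, x ^ (mm * (if c = 0 then 0 else c)) = qnum r (x ^ mm) := by
  rw [qnum]
  refine Finset.sum_congr rfl fun c _ => ?_
  rw [← pow_mul]
  congr 1
  split_ifs with hc
  · rw [hc]
  · rfl

lemma factor1 (x : ℂ) (mm r' : ℕ) :
    ∑ c ∈ range (r' + 1), x ^ (mm * (if c = 0 then (r' + 1) else c))
      = x ^ mm * qnum (r' + 1) (x ^ mm) := by
  rw [qnum, Finset.mul_sum, Finset.sum_range_succ', Finset.sum_range_succ]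
  congr 1
  · refine Finset.sum_congr rfl fun c _ => ?_
    rw [if_neg (Nat.succ_ne_zero c), ← pow_succ', ← pow_mul]
  · rw [if_pos rfl, ← pow_succ', ← pow_mul]

lemma factor [NeZero r] (x : ℂ) (w : Equiv.Perm (Fin n)) (i : ℕ) :
    ∑ c : Fin r, x ^ ((i + 1) * sdig r n w i (c : ℕ)) =
      x ^ ((i + 1) * (if i + 1 < n ∧ Wv n w (i + 1) < Wv n w i then 1 else 0))
        * qnum r (x ^ (i + 1)) := by
  have hr : 1 ≤ r := Nat.pos_of_ne_zero (NeZero.ne r)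
  rw [Fin.sum_univ_eq_sum_range (fun c => x ^ ((i + 1) * sdig r n w i c)) r]
  by_cases hd : i + 1 < n ∧ Wv n w (i + 1) < Wv n w i
  · rw [if_pos hd, mul_one]
    have e : ∀ c ∈ range r, x ^ ((i + 1) * sdig r n w i c)
        = x ^ ((i + 1) * (if c = 0 then r else c)) := by
      intro c _
      rw [sdig, if_pos hd]
    rw [Finset.sum_congr rfl e]
    obtain ⟨r', rfl⟩ : ∃ r', r = r' + 1 := ⟨r - 1, by omega⟩
    exact factor1 x (i + 1) r'
  · rw [if_neg hd, mul_zero, pow_zero, one_mul]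
    have e : ∀ c ∈ range r, x ^ ((i + 1) * sdig r n w i c)
        = x ^ ((i + 1) * (if c = 0 then 0 else c)) := by
      intro c _
      rw [sdig, if_neg hd]
    rw [Finset.sum_congr rfl e]
    exact factor0 x (i + 1) r

end SM

open SM

/-- signed Mahonian over the fiber `{π ∈ G_{r,n} : |π| = w}`. -/
theorem signed_mahonian_fiber (r n h : ℕ) (ζ ε q : ℂ)
    (hr : 1 ≤ r) (hn : 1 ≤ n) (hζ : IsPrimitiveRoot ζ r)
    (hε : ε = 1 ∨ ε = -1) (hh : h < r) (w : Equiv.Perm (Fin n)) :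
    ∑ π ∈ Finset.univ.filter (fun π : GP r n => π.1 = w),
      chi ε ζ h (window π) * q ^ fmaj r (window π)
    = ε ^ invNum (permList w) * (ζ ^ h * q) ^ majL (permList w) *
        ∏ j ∈ Finset.Icc 1 n, qnum r ((ζ ^ h * q) ^ j) := by

  haveI : NeZero r := ⟨by omega⟩
  set x : ℂ := ζ ^ h * q with hx
  -- Step 1: reduce to a sum over colorings
  have step1 : ∑ π ∈ Finset.univ.filter (fun π : GP r n => π.1 = w),
      chi ε ζ h (window π) * q ^ fmaj r (window π)
      = ∑ z : Fin n → Fin r, chi ε ζ h (window (w, z)) * q ^ fmaj r (window (w, z)) := by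
    rw [Finset.sum_filter, Fintype.sum_prod_type]
    rw [Finset.sum_eq_single w]
    · simp
    · intro b _ hb
      simp [hb]
    · intro hw
      exact absurd (Finset.mem_univ w) hw
  -- Step 2: termwise rewriting of the character
  have hcol : ∀ z : Fin n → Fin r,
      chi ε ζ h (window (w, z)) * q ^ fmaj r (window (w, z))
        = (ε ^ invNum (permList w)) * x ^ fmaj r (window (w, z)) := by
    intro z
    rw [chi, absList_window]
    have hxz : ζ ^ (h * fmaj r (window (w, z))) = ζ ^ (h * colSum (window (w, z))) := by
      have e : h * (r * majF (window (w, z)) + colSum (window (w, z)))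
          = r * (h * majF (window (w, z))) + h * colSum (window (w, z)) := by ring
      rw [fmaj, e, pow_add, pow_mul, hζ.pow_eq_one, one_pow, one_mul]
    have hxf : x ^ fmaj r (window (w, z))
        = ζ ^ (h * colSum (window (w, z))) * q ^ fmaj r (window (w, z)) := by
      rw [hx, mul_pow, ← pow_mul, hxz]
    rw [hxf]
    ring
  rw [step1, Finset.sum_congr rfl (fun z _ => hcol z), ← Finset.mul_sum, mul_assoc]
  congr 1
  -- Step 3: change of variable via Fmap
  rw [← Function.Bijective.sum_comp (Fmap_bijective) (fun z => x ^ fmaj r (window (w, z)))]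
  have e2 : ∀ u : Fin n → Fin r, x ^ fmaj r (window (w, Fmap r n u))
      = ∏ i : Fin n, x ^ (((i : ℕ) + 1) * sdig r n w i ((u i : ℕ))) := by
    intro u
    rw [fmaj_Fmap hn w u, ← Finset.prod_pow_eq_pow_sum,
      ← Fin.prod_univ_eq_prod_range (fun i => x ^ ((i + 1) * sdig r n w i (Uv r n u i))) n]
    refine Finset.prod_congr rfl fun i _ => ?_
    have hu : Uv r n u (i : ℕ) = (u i : ℕ) := by rw [Uv, dif_pos i.isLt]
    rw [hu]
  rw [Finset.sum_congr rfl (fun u _ => e2 u)]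
  rw [← Fintype.piFinset_univ,
    ← Finset.prod_univ_sum (fun _ : Fin n => (Finset.univ : Finset (Fin r)))
      (fun i c => x ^ (((i : ℕ) + 1) * sdig r n w (i : ℕ) ((c : Fin r) : ℕ)))]
  -- Step 4: evaluate each factor
  have e3 : ∀ i : Fin n, (∑ j : Fin r, x ^ (((i : ℕ) + 1) * sdig r n w (i : ℕ) ((j : Fin r) : ℕ)))
      = x ^ (((i : ℕ) + 1) * (if (i : ℕ) + 1 < n ∧ Wv n w ((i : ℕ) + 1) < Wv n w (i : ℕ) then 1 else 0))
        * qnum r (x ^ ((i : ℕ) + 1)) := fun i => factor x w (i : ℕ)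
  rw [Finset.prod_congr rfl (fun i _ => e3 i)]
  rw [Finset.prod_mul_distrib, Finset.prod_pow_eq_pow_sum]
  congr 1
  · -- exponent equals majL
    congr 1
    rw [majL_permList]
    rw [Fin.sum_univ_eq_sum_range
      (fun i => (i + 1) * (if i + 1 < n ∧ Wv n w (i + 1) < Wv n w i then 1 else 0)) n]
    rw [← Finset.sum_subset (Finset.range_subset_range.mpr (by omega : n - 1 ≤ n))
      (fun i hi hni => by
        rw [Finset.mem_range] at hi
        rw [Finset.mem_range, not_lt] at hni
        have : ¬ (i + 1 < n ∧ Wv n w (i + 1) < Wv n w i) := by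
          intro hcon; omega
        rw [if_neg this, mul_zero])]
    refine Finset.sum_congr rfl fun i hi => ?_
    rw [Finset.mem_range] at hi
    have hg : i + 1 < n := by omega
    by_cases hW : Wv n w (i + 1) < Wv n w i
    · rw [if_pos hW, if_pos ⟨hg, hW⟩, mul_one]
    · rw [if_neg hW, if_neg (fun hcon => hW hcon.2), mul_zero]
  · -- product over Fin n equals product over Icc 1 n
    rw [Fin.prod_univ_eq_prod_range (fun j => qnum r (x ^ (j + 1))) n]
    rw [show Finset.Icc 1 n = Finset.Ico 1 (n + 1) from (Finset.Ico_add_one_right_eq_Icc 1 n).symm]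
    rw [Finset.prod_Ico_eq_prod_range]
    simp only [Nat.add_sub_cancel]
    refine Finset.prod_congr rfl fun j _ => ?_
    rw [Nat.add_comm 1 j]
end

section
/- For every permutation w of {1,…,n} there exists π ∈ G_{r,n} with |π| = w such that fmaj(π) = maj(w) and col(π) ≡ maj(w) (mod r); consequently, for every ε ∈ {1,−1} and h ∈ {0,…,r−1}, χ_{ε,h}(π) = ε^{inv(w)} · ζ^{h·maj(w)}. -/
open Finset

open scoped Classical

/-!
Colour position `i` of `w` by `dᵢ mod r`, where `dᵢ` is the number of descents of `w` at
positions `≥ i`. Along the window, `dᵢ` drops by one exactly at the descents of `w`, and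
`⌊dᵢ / r⌋` drops by one exactly at the `<_F`-descents. Abel summation then gives
`maj(w) = ∑ dᵢ` and `maj_F(π) = ∑ ⌊dᵢ / r⌋`, while `col(π) = ∑ (dᵢ mod r)`, so
`fmaj(π) = ∑ (r ⌊dᵢ / r⌋ + dᵢ mod r) = maj(w)`. Reducing mod `r` gives `col(π) ≡ maj(w)`,
and the character value follows from `ζ ^ r = 1`.
-/

lemma Finset.sum_range_eq_sum_succ_mul_add {R : Type*} [CommSemiring R] (f g : ℕ → R) (m : ℕ)
    (hf : ∀ i < m, f i = f (i + 1) + g i) :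
    ∑ i ∈ range m, f i = ∑ i ∈ range m, (i + 1 : R) * g i + m * f m := by
  induction m with
  | zero => simp
  | succ m ih =>
    rw [sum_range_succ, sum_range_succ, ih fun i hi => hf i (by omega), hf m (by omega)]
    push_cast
    ring

lemma Nat.dvd_add_one_iff_mod_le {a r : ℕ} (hr : 0 < r) : r ∣ a + 1 ↔ (a + 1) % r ≤ a % r := by
  rw [Nat.dvd_iff_mod_eq_zero]
  obtain rfl | hr1 : r = 1 ∨ 1 < r := by omega
  · simp [Nat.mod_one]
  · have := Nat.mod_lt a hr
    rw [Nat.add_mod_eq_ite, Nat.one_mod_eq_one.mpr hr1.ne']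
    grind

lemma colSum_eq_sum_range (l : List (ℕ × ℕ)) :
    colSum l = ∑ i ∈ range l.length, (l.getD i (0, 0)).2 := by
  induction l with
  | nil => rfl
  | cons a l ih => simp_all [colSum, sum_range_succ', add_comm]

lemma getD_absList (l : List (ℕ × ℕ)) (i : ℕ) : (absList l).getD i 0 = (l.getD i (0, 0)).1 :=
  List.getD_map l (0, 0) Prod.fst

lemma length_absList (l : List (ℕ × ℕ)) : (absList l).length = l.length :=
  List.length_map _

def descentsFrom (L : List ℕ) (i : ℕ) : ℕ :=
  #{j ∈ Ico i (L.length - 1) | L.getD (j + 1) 0 < L.getD j 0}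

lemma descentsFrom_of_le {L : List ℕ} {i : ℕ} (hi : L.length - 1 ≤ i) :
    descentsFrom L i = 0 := by
  simp [descentsFrom, Ico_eq_empty_of_le hi]

lemma descentsFrom_eq_succ_add {L : List ℕ} {i : ℕ} (hi : i < L.length - 1) :
    descentsFrom L i =
      descentsFrom L (i + 1) + if L.getD (i + 1) 0 < L.getD i 0 then 1 else 0 := by
  simp only [descentsFrom, card_filter]
  rw [sum_eq_sum_Ico_succ_bot hi, add_comm]

lemma majL_eq_sum_descentsFrom (L : List ℕ) :
    majL L = ∑ i ∈ range (L.length - 1), descentsFrom L i := by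
  have := sum_range_eq_sum_succ_mul_add (descentsFrom L) _ (L.length - 1)
    fun i hi => descentsFrom_eq_succ_add hi
  rw [descentsFrom_of_le le_rfl, mul_zero, add_zero] at this
  simp only [this, majL, Nat.cast_id, mul_boole]

def HasDescentColoring (r : ℕ) (l : List (ℕ × ℕ)) : Prop :=
  ∀ i < l.length, (l.getD i (0, 0)).2 = descentsFrom (absList l) i % r

section DescentColoring

variable {r : ℕ} {l : List (ℕ × ℕ)}

lemma flt_getD_iff (hr : 0 < r) (hl : HasDescentColoring r l) {i : ℕ}
    (hi : i < l.length - 1) :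
    Flt (l.getD (i + 1) (0, 0)) (l.getD i (0, 0)) ↔
      (absList l).getD (i + 1) 0 < (absList l).getD i 0 ∧ r ∣ descentsFrom (absList l) i := by
  have hi' : i < (absList l).length - 1 := by rwa [length_absList]
  rw [Flt, hl i (by omega), hl (i + 1) (by omega), descentsFrom_eq_succ_add hi', getD_absList,
    getD_absList]
  by_cases hdesc : (l.getD (i + 1) (0, 0)).1 < (l.getD i (0, 0)).1
  · simp only [hdesc, if_true, and_true, true_and, Nat.dvd_add_one_iff_mod_le hr]
    constructor <;> intro <;> omega
  · simp only [hdesc, if_false, add_zero, lt_irrefl, false_or, and_false, false_and]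

lemma descentsFrom_div_eq_succ_add (hr : 0 < r) (hl : HasDescentColoring r l) {i : ℕ}
    (hi : i < l.length - 1) :
    descentsFrom (absList l) i / r = descentsFrom (absList l) (i + 1) / r +
      if Flt (l.getD (i + 1) (0, 0)) (l.getD i (0, 0)) then 1 else 0 := by
  have hi' : i < (absList l).length - 1 := by rwa [length_absList]
  rw [if_congr (flt_getD_iff hr hl hi) rfl rfl, descentsFrom_eq_succ_add hi']
  by_cases hdesc : (absList l).getD (i + 1) 0 < (absList l).getD i 0
  · simp only [hdesc, if_true, true_and, Nat.succ_div]
  · simp only [hdesc, if_false, false_and, add_zero]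

lemma majF_eq_sum_descentsFrom_div (hr : 0 < r) (hl : HasDescentColoring r l) :
    majF l = ∑ i ∈ range (l.length - 1), descentsFrom (absList l) i / r := by
  have := sum_range_eq_sum_succ_mul_add (fun i => descentsFrom (absList l) i / r) _ _
    fun i hi => descentsFrom_div_eq_succ_add hr hl hi
  rw [descentsFrom_of_le (by rw [length_absList]), Nat.zero_div, mul_zero, add_zero] at this
  simp only [this, majF, Nat.cast_id, mul_boole]

lemma colSum_eq_sum_descentsFrom_mod (hl : HasDescentColoring r l) :
    colSum l = ∑ i ∈ range (l.length - 1), descentsFrom (absList l) i % r := by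
  rw [colSum_eq_sum_range, sum_congr rfl fun i hi => hl i (mem_range.mp hi)]
  refine (sum_subset (range_subset_range.mpr (Nat.sub_le _ 1)) fun i _ hi => ?_).symm
  rw [descentsFrom_of_le (by rw [length_absList]; simpa using hi), Nat.zero_mod]

lemma fmaj_eq_majL_absList (hr : 0 < r) (hl : HasDescentColoring r l) :
    fmaj r l = majL (absList l) := by
  rw [fmaj, majF_eq_sum_descentsFrom_div hr hl, colSum_eq_sum_descentsFrom_mod hl,
    majL_eq_sum_descentsFrom, length_absList, mul_sum, ← sum_add_distrib]
  exact sum_congr rfl fun i _ => Nat.div_add_mod _ r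

end DescentColoring

lemma colSum_modEq_fmaj (r : ℕ) (l : List (ℕ × ℕ)) : colSum l ≡ fmaj r l [MOD r] :=
  (Nat.mul_add_mod _ _ _).symm

lemma chi_eq_of_colSum_modEq {r c : ℕ} {ε ζ : ℂ} (h : ℕ) (hζ : ζ ^ r = 1) {l : List (ℕ × ℕ)}
    (hc : colSum l ≡ c [MOD r]) : chi ε ζ h l = ε ^ invNum (absList l) * ζ ^ (h * c) := by
  rw [chi, pow_eq_pow_of_modEq (hc.mul_left h) hζ]

lemma absList_window {r n : ℕ} (π : GP r n) : absList (window π) = permList π.1 := by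
  simp [absList, window, permList]

lemma getD_window {r n : ℕ} (π : GP r n) {i : ℕ} (hi : i < n) :
    (window π).getD i (0, 0) = ((π.1 ⟨i, hi⟩ : ℕ) + 1, (π.2 ⟨i, hi⟩ : ℕ)) := by
  simp [window, hi]

theorem exists_min_fmaj_in_fiber_general (r n : ℕ) (ζ : ℂ)
    (hr : 1 ≤ r) (hζ : IsPrimitiveRoot ζ r)
    (w : Equiv.Perm (Fin n)) :
    ∃ π : GP r n, π.1 = w ∧ fmaj r (window π) = majL (permList w) ∧
      colSum (window π) ≡ majL (permList w) [MOD r] ∧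
      ∀ ε : ℂ, (ε = 1 ∨ ε = -1) → ∀ h : ℕ, h < r →
        chi ε ζ h (window π) = ε ^ invNum (permList w) * ζ ^ (h * majL (permList w)) := by
  let π : GP r n := (w, fun i => ⟨descentsFrom (permList w) i % r, Nat.mod_lt _ hr⟩)
  have hcolors : HasDescentColoring r (window π) := by
    intro i hi
    rw [absList_window, getD_window π (by simpa [window] using hi)]
  have hfmaj : fmaj r (window π) = majL (permList w) := by
    rw [fmaj_eq_majL_absList hr hcolors, absList_window]
  have hmod : colSum (window π) ≡ majL (permList w) [MOD r] :=
    hfmaj ▸ colSum_modEq_fmaj r (window π)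
  refine ⟨π, rfl, hfmaj, hmod, fun ε _ h _ => ?_⟩
  rw [chi_eq_of_colSum_modEq h hζ.pow_eq_one hmod, absList_window]

/-- each fiber `{π : |π| = w}` contains an element whose flag
major index is `maj(w)` and whose color sum is `≡ maj(w) (mod r)`; consequently
its character value is `ε^{inv(w)} ζ^{h·maj(w)}`. -/
theorem exists_min_fmaj_in_fiber (r n : ℕ) (ζ : ℂ)
    (hr : 1 ≤ r) (hn : 1 ≤ n) (hζ : IsPrimitiveRoot ζ r)
    (w : Equiv.Perm (Fin n)) :
    ∃ π : GP r n, π.1 = w ∧ fmaj r (window π) = majL (permList w) ∧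
      colSum (window π) ≡ majL (permList w) [MOD r] ∧
      ∀ ε : ℂ, (ε = 1 ∨ ε = -1) → ∀ h : ℕ, h < r →
        chi ε ζ h (window π) = ε ^ invNum (permList w) * ζ ^ (h * majL (permList w)) :=
  exists_min_fmaj_in_fiber_general r n ζ hr hζ w
end

section
/- For every ε ∈ {1,−1} and every q ∈ ℂ, ∑_{π ∈ G*_{r,n}} ε^{inv(|π|)} q^{Dmaj(π)} = (∏_{j=1}^{n−1} [j·r]_{ε^{j−1} q}) · [n]_{ε^{n−1} q}. -/
/-!
Summing over the colors first. For a fixed permutation `σ`, the last color of `π ∈ G(r,r,n)` is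
determined by the others and does not enter `Dmaj`, so the colors `z₁, …, z_{n-1}` run freely
over `ℤ_r`. With `z_n = 0` one has `Dmaj = ∑ i·bᵢ`, where `bᵢ = zᵢ - z_{i+1} + r·[i is a flag
descent]`. For fixed `z_{i+1}`, as `zᵢ` runs over `ℤ_r`, `bᵢ` runs once over
`χᵢ, …, χᵢ + r - 1`, with `χᵢ = [σ_{i+1} < σᵢ]`. Summing out `z₁, z₂, …` in turn gives
`q^{maj σ} ∏_{i<n} [r]_{q^i}`.

The signed Mahonian identity `∑_σ ε^{inv σ} q^{maj σ} = ∏_{j ≤ n} [j]_{ε^{j-1} q}` is refined by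
the last letter `t`, for words on an arbitrary set of letters. Removing `t` adds to `inv` the
number `K` of letters above `t`, and adds `n - 1` to `maj` exactly when the letter before `t` is
one of those `K`. By induction the refined sum is `(ε^{n-1} q)^K ∏_{j<n} [j]_{ε^{j-1} q}`.
Finally `[jr]_x = [j]_x [r]_{x^j}`, and `(ε^{j-1} q)^j = q^j` because `ε² = 1`.
-/

open Finset

open scoped Classical

/-- The window of `π` with the color of its last entry replaced by `0`;
`Dmaj(π) = fmaj` of this word. -/
def windowD {r n : ℕ} (π : GP r n) : List (ℕ × ℕ) :=
  (List.finRange n).map fun i =>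
    ((π.1 i : ℕ) + 1, if (i : ℕ) = n - 1 then 0 else (π.2 i : ℕ))

/-! ### `q`-integers -/

lemma qnum_add (a b : ℕ) (x : ℂ) : qnum (a + b) x = qnum a x + x ^ a * qnum b x := by
  simp only [qnum, sum_range_add, mul_sum, pow_add]

lemma qnum_mul (a b : ℕ) (x : ℂ) : qnum (a * b) x = qnum a x * qnum b (x ^ a) := by
  induction b with
  | zero => simp [qnum]
  | succ b ih =>
    rw [Nat.mul_succ, qnum_add, ih]
    simp only [qnum, sum_range_succ, ← pow_mul]
    ring

lemma qnum_eq_sum_fin (m : ℕ) (x : ℂ) : qnum m x = ∑ k : Fin m, x ^ (k : ℕ) :=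
  (Fin.sum_univ_eq_sum_range (x ^ ·) m).symm

lemma pow_mul_succ_self_eq_one {ε : ℂ} (hε : ε ^ 2 = 1) (j : ℕ) : ε ^ (j * (j + 1)) = 1 := by
  obtain ⟨k, hk⟩ := Nat.even_mul_succ_self j
  rw [hk, ← two_mul, pow_mul, hε, one_pow]

lemma qnum_succ_mul {ε : ℂ} (hε : ε ^ 2 = 1) (q : ℂ) (j r : ℕ) :
    qnum ((j + 1) * r) (ε ^ j * q) = qnum (j + 1) (ε ^ j * q) * qnum r (q ^ (j + 1)) := by
  rw [qnum_mul, mul_pow, ← pow_mul, pow_mul_succ_self_eq_one hε, one_mul]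

lemma sum_range_ite_mul_pow (a x : ℂ) {K n : ℕ} (hK : K ≤ n) :
    ∑ k ∈ range n, (if k < K then a else 1) * x ^ k = a * qnum K x + x ^ K * qnum (n - K) x := by
  obtain ⟨L, rfl⟩ := Nat.exists_eq_add_of_le hK
  rw [sum_range_add, Nat.add_sub_cancel_left, qnum, qnum, mul_sum, mul_sum]
  congr 1 <;> refine sum_congr rfl fun k hk => ?_
  · rw [if_pos (mem_range.1 hk)]
  · rw [if_neg (by omega), one_mul, pow_add]

-- `[m + 1]_x` with `x = ε ^ m * q`, rotated by `K` places: the wrapped-around terms pick up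
-- `q ^ (m + 1)`.
lemma insertion_identity {ε : ℂ} (hε : ε ^ 2 = 1) (q : ℂ) {m K : ℕ} (hK : K ≤ m + 1) :
    ε ^ K * (q ^ (m + 1) * qnum K (ε ^ m * q) + (ε ^ m * q) ^ K * qnum (m + 1 - K) (ε ^ m * q))
      = (ε ^ (m + 1) * q) ^ K * qnum (m + 1) (ε ^ m * q) := by
  obtain ⟨L, hL⟩ := Nat.exists_eq_add_of_le hK
  have hexp : (m + 1) * K + m * L = K + m * (m + 1) := by nlinarith
  have hsign : ε ^ K * q ^ (m + 1) = (ε ^ (m + 1) * q) ^ K * (ε ^ m * q) ^ L := by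
    calc ε ^ K * q ^ (m + 1) = ε ^ ((m + 1) * K + m * L) * q ^ (K + L) := by
          rw [hexp, pow_add ε, pow_mul_succ_self_eq_one hε, mul_one, hL]
      _ = _ := by ring
  have hsplit :
      qnum (m + 1) (ε ^ m * q) = qnum L (ε ^ m * q) + (ε ^ m * q) ^ L * qnum K (ε ^ m * q) := by
    rw [← qnum_add, hL, add_comm]
  rw [hsplit, show m + 1 - K = L by omega]
  linear_combination qnum K (ε ^ m * q) * hsign

/-! ### Inversions and major index of words -/

/-- Words of length `n` are encoded as sequences `ℕ → α` of which only the first `n` letters are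
read; `invNum l` and `majF l` are these statistics of `l.getD`. -/
def seqInv (n : ℕ) (w : ℕ → ℕ) : ℕ :=
  ∑ i ∈ range n, ∑ j ∈ range n, if i < j ∧ w j < w i then 1 else 0

def seqMaj {α : Type*} (lt : α → α → Prop) [DecidableRel lt] (n : ℕ) (w : ℕ → α) : ℕ :=
  ∑ i ∈ range (n - 1), if lt (w (i + 1)) (w i) then i + 1 else 0

lemma invNum_eq_seqInv (l : List ℕ) : invNum l = seqInv l.length (l.getD · 0) := rfl

lemma majF_eq_seqMaj (l : List (ℕ × ℕ)) : majF l = seqMaj Flt l.length (l.getD · (0, 0)) := rfl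

lemma seqInv_congr {n : ℕ} {w w' : ℕ → ℕ} (h : ∀ i < n, w i = w' i) :
    seqInv n w = seqInv n w' :=
  sum_congr rfl fun i hi => sum_congr rfl fun j hj => by
    rw [h i (mem_range.1 hi), h j (mem_range.1 hj)]

lemma seqMaj_congr {α : Type*} {lt : α → α → Prop} [DecidableRel lt] {n : ℕ} {w w' : ℕ → α}
    (h : ∀ i < n, w i = w' i) : seqMaj lt n w = seqMaj lt n w' :=
  sum_congr rfl fun i hi => by
    have := mem_range.1 hi
    rw [h i (by omega), h (i + 1) (by omega)]

lemma seqInv_succ (n : ℕ) (w : ℕ → ℕ) :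
    seqInv (n + 1) w = seqInv n w + #{i ∈ range n | w n < w i} := by
  have hlast : ∑ j ∈ range (n + 1), (if n < j ∧ w j < w n then 1 else 0) = 0 :=
    sum_eq_zero fun j hj => if_neg fun h => by have := mem_range.1 hj; omega
  have hrow : ∀ i ∈ range n, ∑ j ∈ range (n + 1), (if i < j ∧ w j < w i then 1 else 0)
      = ∑ j ∈ range n, (if i < j ∧ w j < w i then 1 else 0) + if w n < w i then 1 else 0 :=
    fun i hi => by rw [sum_range_succ, if_congr (and_iff_right (mem_range.1 hi)) rfl rfl]
  rw [seqInv, sum_range_succ, hlast, add_zero, sum_congr rfl hrow, sum_add_distrib, card_filter]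
  rfl

lemma seqMaj_succ_succ {α : Type*} (lt : α → α → Prop) [DecidableRel lt] (n : ℕ) (w : ℕ → α) :
    seqMaj lt (n + 2) w = seqMaj lt (n + 1) w + if lt (w (n + 1)) (w n) then n + 1 else 0 := by
  simp only [seqMaj, Nat.add_sub_cancel, show n + 2 - 1 = n + 1 by omega, sum_range_succ]

lemma seqMaj_succ_eq_sum {α : Type*} (lt : α → α → Prop) [DecidableRel lt] (m : ℕ) (w : ℕ → α) :
    seqMaj lt (m + 1) w = ∑ i ∈ range m, (i + 1) * if lt (w (i + 1)) (w i) then 1 else 0 := by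
  simp only [seqMaj, Nat.add_sub_cancel, mul_ite, mul_one, mul_zero]

def extendByZero {m : ℕ} (w : Fin m → ℕ) (i : ℕ) : ℕ := if h : i < m then w ⟨i, h⟩ else 0

lemma extendByZero_of_lt {m : ℕ} (w : Fin m → ℕ) {i : ℕ} (h : i < m) :
    extendByZero w i = w ⟨i, h⟩ := dif_pos h

lemma extendByZero_of_le {m : ℕ} (w : Fin m → ℕ) {i : ℕ} (h : m ≤ i) :
    extendByZero w i = 0 := dif_neg (by omega)

lemma extendByZero_snoc_of_lt {m : ℕ} (w : Fin m → ℕ) (t : ℕ) {i : ℕ} (h : i < m) :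
    extendByZero (Fin.snoc w t : Fin (m + 1) → ℕ) i = extendByZero w i := by
  rw [extendByZero_of_lt _ (by omega), extendByZero_of_lt _ h]
  exact Fin.snoc_castSucc (α := fun _ => ℕ) (i := ⟨i, h⟩) ..

lemma extendByZero_snoc_self {m : ℕ} (w : Fin m → ℕ) (t : ℕ) :
    extendByZero (Fin.snoc w t : Fin (m + 1) → ℕ) m = t := by
  rw [extendByZero_of_lt _ (by omega)]
  exact Fin.snoc_last (α := fun _ => ℕ) ..

lemma seqInv_snoc {m : ℕ} (w : Fin m → ℕ) (t : ℕ) :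
    seqInv (m + 1) (extendByZero (Fin.snoc w t : Fin (m + 1) → ℕ))
      = seqInv m (extendByZero w) + #{i | t < w i} := by
  rw [seqInv_succ, seqInv_congr fun i hi => extendByZero_snoc_of_lt w t hi,
    extendByZero_snoc_self]
  congr 1
  rw [card_filter, card_filter, ← Fin.sum_univ_eq_sum_range]
  refine sum_congr rfl fun i _ => ?_
  rw [extendByZero_snoc_of_lt w t i.is_lt, extendByZero_of_lt w i.is_lt]

lemma seqMaj_snoc {m : ℕ} (w : Fin (m + 1) → ℕ) (t : ℕ) :
    seqMaj (· < ·) (m + 2) (extendByZero (Fin.snoc w t : Fin (m + 2) → ℕ))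
      = seqMaj (· < ·) (m + 1) (extendByZero w) + if t < w (Fin.last m) then m + 1 else 0 := by
  rw [seqMaj_succ_succ, seqMaj_congr fun i hi => extendByZero_snoc_of_lt w t hi,
    extendByZero_snoc_self, extendByZero_snoc_of_lt w t (by omega), extendByZero_of_lt w (by omega)]
  rfl

/-! ### The signed Mahonian identity -/

def numAbove (S : Finset ℕ) (t : ℕ) : ℕ := #{u ∈ S | t < u}

lemma numAbove_lt_numAbove_iff {S : Finset ℕ} {s : ℕ} (hs : s ∈ S) (t : ℕ) :
    numAbove S s < numAbove S t ↔ t < s := by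
  constructor
  · intro h
    by_contra hts
    exact h.not_ge (card_le_card fun u hu => by
      simp only [mem_filter] at hu ⊢; exact ⟨hu.1, by omega⟩)
  · intro hts
    refine card_lt_card ⟨fun u hu => ?_, fun hsub => ?_⟩
    · simp only [mem_filter] at hu ⊢; exact ⟨hu.1, by omega⟩
    · simpa using hsub (mem_filter.2 ⟨hs, hts⟩)

lemma numAbove_lt_card {S : Finset ℕ} {s : ℕ} (hs : s ∈ S) : numAbove S s < #S :=
  card_lt_card (filter_ssubset.2 ⟨s, hs, lt_irrefl s⟩)

lemma sum_numAbove {M : Type*} [AddCommMonoid M] (S : Finset ℕ) (g : ℕ → M) :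
    ∑ s ∈ S, g (numAbove S s) = ∑ k ∈ range #S, g k := by
  have hinj : Set.InjOn (numAbove S) S := fun s hs s' hs' h => by
    by_contra hne
    rcases lt_or_gt_of_ne hne with hlt | hlt
    · exact ((numAbove_lt_numAbove_iff hs' s).2 hlt).ne' h
    · exact ((numAbove_lt_numAbove_iff hs s').2 hlt).ne h
  have himage : S.image (numAbove S) = range #S :=
    eq_of_subset_of_card_le
      (fun k hk => by
        obtain ⟨s, hs, rfl⟩ := mem_image.1 hk
        exact mem_range.2 (numAbove_lt_card hs))
      (by rw [card_range, card_image_of_injOn hinj])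
  rw [← himage, sum_image hinj]

def injWords (m : ℕ) (S : Finset ℕ) : Finset (Fin m → ℕ) :=
  {w ∈ Fintype.piFinset fun _ => S | Function.Injective w}

lemma mem_injWords {m : ℕ} {S : Finset ℕ} {w : Fin m → ℕ} :
    w ∈ injWords m S ↔ (∀ i, w i ∈ S) ∧ Function.Injective w := by
  simp [injWords]

lemma snoc_mem_injWords_iff {m : ℕ} {S : Finset ℕ} {t : ℕ} (ht : t ∈ S) (w : Fin m → ℕ) :
    (Fin.snoc w t : Fin (m + 1) → ℕ) ∈ injWords (m + 1) S ↔ w ∈ injWords m (S.erase t) := by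
  simp only [mem_injWords, Fin.forall_fin_succ', Fin.snoc_castSucc, Fin.snoc_last,
    Fin.snoc_injective_iff, mem_erase, Set.mem_range, not_exists, ht, and_true]
  constructor
  · rintro ⟨hS, hinj, hne⟩; exact ⟨fun i => ⟨hne i, hS i⟩, hinj⟩
  · rintro ⟨hS, hinj⟩; exact ⟨fun i => (hS i).2, hinj, fun i => (hS i).1⟩

lemma sum_injWords_filter_last_eq_sum_snoc {M : Type*} [AddCommMonoid M] {m : ℕ}
    {S : Finset ℕ} {t : ℕ} (ht : t ∈ S) (f : (Fin (m + 1) → ℕ) → M) :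
    ∑ w ∈ injWords (m + 1) S with w (Fin.last m) = t, f w
      = ∑ w ∈ injWords m (S.erase t), f (Fin.snoc w t) := by
  have hsnoc : ∀ w : Fin (m + 1) → ℕ, w (Fin.last m) = t → Fin.snoc (Fin.init w) t = w :=
    fun w hw => hw ▸ Fin.snoc_init_self w
  refine sum_nbij' Fin.init (Fin.snoc · t) (fun w hw => ?_) (fun w hw => ?_)
    (fun w hw => hsnoc w (mem_filter.1 hw).2) (fun w _ => Fin.init_snoc _ _)
    (fun w hw => by rw [hsnoc w (mem_filter.1 hw).2])
  · obtain ⟨hw, hlast⟩ := mem_filter.1 hw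
    rw [← snoc_mem_injWords_iff ht, hsnoc w hlast]
    exact hw
  · exact mem_filter.2 ⟨(snoc_mem_injWords_iff ht w).2 hw, Fin.snoc_last _ _⟩

lemma card_filter_lt_of_mem_injWords {m : ℕ} {S : Finset ℕ} {w : Fin m → ℕ}
    (hw : w ∈ injWords m S) (hS : #S = m) (t : ℕ) : #{i | t < w i} = numAbove S t := by
  obtain ⟨hmem, hinj⟩ := mem_injWords.1 hw
  have himage : univ.image w = S :=
    eq_of_subset_of_card_le (fun u hu => by obtain ⟨i, -, rfl⟩ := mem_image.1 hu; exact hmem i)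
      (by rw [hS, card_image_of_injective _ hinj, card_univ, Fintype.card_fin])
  rw [numAbove, ← himage, filter_image, card_image_of_injective _ hinj]

noncomputable def invMajWeight (ε q : ℂ) (n : ℕ) (w : ℕ → ℕ) : ℂ :=
  ε ^ seqInv n w * q ^ seqMaj (· < ·) n w

noncomputable def signedQFactorial (ε q : ℂ) (m : ℕ) : ℂ :=
  ∏ j ∈ range m, qnum (j + 1) (ε ^ j * q)

lemma signedQFactorial_succ (ε q : ℂ) (m : ℕ) :
    signedQFactorial ε q (m + 1) = signedQFactorial ε q m * qnum (m + 1) (ε ^ m * q) :=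
  prod_range_succ _ _

lemma invMajWeight_snoc (ε q : ℂ) {m : ℕ} {S : Finset ℕ} (hS : #S = m + 1) {w : Fin (m + 1) → ℕ}
    (hw : w ∈ injWords (m + 1) S) (t : ℕ) :
    invMajWeight ε q (m + 2) (extendByZero (Fin.snoc w t : Fin (m + 2) → ℕ))
      = ε ^ numAbove S t * (if t < w (Fin.last m) then q ^ (m + 1) else 1)
          * invMajWeight ε q (m + 1) (extendByZero w) := by
  rw [invMajWeight, invMajWeight, seqInv_snoc, seqMaj_snoc, card_filter_lt_of_mem_injWords hw hS,
    pow_add, pow_add]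
  split_ifs <;> ring

lemma numAbove_erase (S : Finset ℕ) (t : ℕ) : numAbove (S.erase t) t = numAbove S t := by
  rw [numAbove, numAbove, filter_erase, erase_eq_of_notMem (by simp)]

theorem sum_invMajWeight_injWords_filter_last {ε : ℂ} (hε : ε ^ 2 = 1) (q : ℂ) {m : ℕ}
    {S : Finset ℕ} (hS : #S = m + 1) {t : ℕ} (ht : t ∈ S) :
    ∑ w ∈ injWords (m + 1) S with w (Fin.last m) = t, invMajWeight ε q (m + 1) (extendByZero w)
      = (ε ^ m * q) ^ numAbove S t * signedQFactorial ε q m := by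
  induction m generalizing S t with
  | zero =>
    obtain ⟨a, rfl⟩ := card_eq_one.1 hS
    rw [mem_singleton.1 ht, sum_injWords_filter_last_eq_sum_snoc (mem_singleton_self a)]
    have hweight : ∀ w : ℕ → ℕ, invMajWeight ε q 1 w = 1 := by
      simp [invMajWeight, seqInv, seqMaj, filter_singleton]
    simp [hweight, numAbove, signedQFactorial, injWords, Function.injective_of_subsingleton,
      filter_singleton]
  | succ m ih =>
    set S' := S.erase t
    set K := numAbove S t
    have hS' : #S' = m + 1 := by rw [card_erase_of_mem ht, hS]; rfl
    have hK' : numAbove S' t = K := numAbove_erase S t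
    have hK : K ≤ m + 1 := by rw [← hK', ← hS']; exact card_filter_le _ _
    have hlast : ∀ w ∈ injWords (m + 1) S', w (Fin.last m) ∈ S' :=
      fun w hw => (mem_injWords.1 hw).1 _
    calc ∑ w ∈ injWords (m + 2) S with w (Fin.last (m + 1)) = t,
            invMajWeight ε q (m + 2) (extendByZero w)
        = ∑ s ∈ S', ∑ w ∈ injWords (m + 1) S' with w (Fin.last m) = s,
            ε ^ K * (if t < s then q ^ (m + 1) else 1)
              * invMajWeight ε q (m + 1) (extendByZero w) := by
          rw [sum_injWords_filter_last_eq_sum_snoc ht, ← sum_fiberwise_of_maps_to hlast]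
          refine sum_congr rfl fun s _ => sum_congr rfl fun w hw => ?_
          obtain ⟨hw', rfl⟩ := mem_filter.1 hw
          rw [invMajWeight_snoc ε q hS' hw', hK']
      _ = ε ^ K * signedQFactorial ε q m * ∑ s ∈ S',
            (if numAbove S' s < K then q ^ (m + 1) else 1) * (ε ^ m * q) ^ numAbove S' s := by
          rw [mul_sum]
          refine sum_congr rfl fun s hs => ?_
          rw [← mul_sum, ih hS' hs, ← hK']
          simp only [numAbove_lt_numAbove_iff hs]
          ring
      _ = (ε ^ (m + 1) * q) ^ K * signedQFactorial ε q (m + 1) := by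
          rw [sum_numAbove S' (fun k => (if k < K then q ^ (m + 1) else 1) * (ε ^ m * q) ^ k),
            hS', sum_range_ite_mul_pow _ _ hK, signedQFactorial_succ]
          linear_combination signedQFactorial ε q m * insertion_identity hε q hK

theorem sum_invMajWeight_injWords {ε : ℂ} (hε : ε ^ 2 = 1) (q : ℂ) {m : ℕ} {S : Finset ℕ}
    (hS : #S = m + 1) :
    ∑ w ∈ injWords (m + 1) S, invMajWeight ε q (m + 1) (extendByZero w)
      = signedQFactorial ε q (m + 1) := by
  rw [← sum_fiberwise_of_maps_to fun w hw => (mem_injWords.1 hw).1 (Fin.last m)]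
  rw [sum_congr rfl fun t ht => sum_invMajWeight_injWords_filter_last hε q hS ht, ← sum_mul,
    sum_numAbove S (fun k => (ε ^ m * q) ^ k), hS, signedQFactorial_succ, qnum, mul_comm]

lemma sum_perm_eq_sum_injWords {M : Type*} [AddCommMonoid M] (n : ℕ) (f : (Fin n → ℕ) → M) :
    ∑ σ : Equiv.Perm (Fin n), f (fun i => (σ i : ℕ) + 1) = ∑ w ∈ injWords n (Icc 1 n), f w := by
  refine sum_nbij (fun σ i => (σ i : ℕ) + 1) (fun σ _ => ?_) (fun σ _ τ _ h => ?_)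
    (fun w hw => ?_) (fun _ _ => rfl)
  · refine mem_injWords.2 ⟨fun i => mem_Icc.2 ⟨by omega, by omega⟩, fun i j h => ?_⟩
    exact σ.injective (Fin.ext (by simpa using h))
  · exact Equiv.ext fun i => Fin.ext (by simpa using congrFun h i)
  · obtain ⟨hmem, hinj⟩ := mem_injWords.1 (mem_coe.1 hw)
    have hbound : ∀ i, 1 ≤ w i ∧ w i ≤ n := fun i => mem_Icc.1 (hmem i)
    let g : Fin n → Fin n := fun i => ⟨w i - 1, by have := hbound i; omega⟩
    have hg : Function.Injective g := fun i j h => hinj (by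
      have := hbound i; have := hbound j; have := congrArg Fin.val h; simp only [g] at this; omega)
    refine ⟨Equiv.ofBijective g (Finite.injective_iff_bijective.1 hg), mem_coe.2 (mem_univ _), ?_⟩
    funext i
    have := hbound i
    simp only [Equiv.ofBijective_apply, g]
    omega

/-! ### Summing over the colors -/

lemma sum_range_succ_mul_of_add_eq {a b c : ℕ → ℕ} {m : ℕ}
    (h : ∀ i < m, b i + c (i + 1) = c i + a i) :
    ∑ i ∈ range m, (i + 1) * b i + m * c m = ∑ i ∈ range m, c i + ∑ i ∈ range m, (i + 1) * a i := by
  induction m with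
  | zero => simp
  | succ m ih =>
    have hm := h m (by omega)
    have ih := ih fun i hi => h i (by omega)
    simp only [sum_range_succ]
    nlinarith

/-- With `bᵢ := flagStep r πᵢ πᵢ₊₁`, a colored word `π₀ ⋯ π_m` whose last color is `0` has
`fmaj = ∑_{i<m} (i + 1) * bᵢ` (see `fmaj_exponent_eq_sum_flagStep`). -/
def flagStep (r : ℕ) (p p' : ℕ × ℕ) : ℕ := p.2 + (if Flt p' p then r else 0) - p'.2

lemma flagStep_add {r : ℕ} (p : ℕ × ℕ) {p' : ℕ × ℕ} (hp' : p'.2 < r) :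
    flagStep r p p' + p'.2 = p.2 + if Flt p' p then r else 0 := by
  unfold flagStep
  by_cases h : Flt p' p
  · rw [if_pos h]; omega
  · rw [if_neg h]; unfold Flt at h; omega

lemma flagStep_mem_Ico {r : ℕ} {p p' : ℕ × ℕ} (hp : p.2 < r) (hp' : p'.2 < r) :
    (if p'.1 < p.1 then 1 else 0) ≤ flagStep r p p' ∧
      flagStep r p p' < (if p'.1 < p.1 then 1 else 0) + r := by
  unfold flagStep
  by_cases h : Flt p' p
  · rw [if_pos h]; unfold Flt at h; split_ifs <;> omega
  · rw [if_neg h]; unfold Flt at h; split_ifs <;> omega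

/-- As `a` runs over `Fin r`, `flagStep r (u, a) p'` is `≡ a - p'.2 (mod r)` and lies in
`[χ, χ + r)`, `χ = [p'.1 < u]`, so it takes each value there exactly once. -/
lemma sum_pow_flagStep {r : ℕ} (x : ℂ) (u : ℕ) {p' : ℕ × ℕ} (hp' : p'.2 < r) :
    ∑ a : Fin r, x ^ flagStep r (u, a) p' = x ^ (if p'.1 < u then 1 else 0) * qnum r x := by
  set χ := if p'.1 < u then 1 else 0
  have hbound : ∀ a : Fin r, χ ≤ flagStep r (u, a) p' ∧ flagStep r (u, a) p' < χ + r :=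
    fun a => flagStep_mem_Ico (p := (u, a)) a.is_lt hp'
  have hmod : ∀ a : Fin r, (flagStep r (u, a) p' + p'.2) % r = a := fun a => by
    rw [flagStep_add _ hp']
    split_ifs <;> simp [Nat.mod_eq_of_lt a.is_lt]
  let e : Fin r → Fin r := fun a => ⟨flagStep r (u, a) p' - χ, by have := hbound a; omega⟩
  have he : Function.Injective e := fun a a' h => by
    have h' : flagStep r (u, a) p' = flagStep r (u, a') p' := by
      have := hbound a; have := hbound a'; have := congrArg Fin.val h; simp only [e] at this; omega
    exact Fin.ext (by rw [← hmod a, ← hmod a', h'])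
  calc ∑ a : Fin r, x ^ flagStep r (u, a) p' = ∑ a : Fin r, x ^ χ * x ^ (e a : ℕ) :=
        sum_congr rfl fun a _ => by rw [← pow_add]; congr 1; have := hbound a; simp only [e]; omega
    _ = x ^ χ * qnum r x := by
        rw [← mul_sum, qnum_eq_sum_fin,
          (Finite.injective_iff_bijective.1 he).sum_comp (fun k => x ^ (k : ℕ))]

def colorSeq {m r : ℕ} (y : Fin m → Fin r) : ℕ → ℕ := extendByZero fun i => (y i : ℕ)

lemma colorSeq_lt {m r : ℕ} (hr : 0 < r) (y : Fin m → Fin r) (i : ℕ) : colorSeq y i < r := by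
  unfold colorSeq extendByZero
  split_ifs
  exacts [(y _).is_lt, hr]

lemma colorSeq_cons_zero {m r : ℕ} (a : Fin r) (y : Fin m → Fin r) :
    colorSeq (Fin.cons a y : Fin (m + 1) → Fin r) 0 = a := by
  rw [colorSeq, extendByZero_of_lt _ (Nat.succ_pos m)]; rfl

lemma colorSeq_cons_succ {m r : ℕ} (a : Fin r) (y : Fin m → Fin r) (i : ℕ) :
    colorSeq (Fin.cons a y : Fin (m + 1) → Fin r) (i + 1) = colorSeq y i := by
  unfold colorSeq extendByZero
  by_cases h : i < m
  · rw [dif_pos (by omega), dif_pos h]; rfl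
  · rw [dif_neg (by omega), dif_neg h]

theorem sum_prod_pow_flagStep {r : ℕ} (hr : 0 < r) (m : ℕ) (x : ℕ → ℂ) (w : ℕ → ℕ) :
    ∑ y : Fin m → Fin r, ∏ i ∈ range m,
        x i ^ flagStep r (w i, colorSeq y i) (w (i + 1), colorSeq y (i + 1))
      = ∏ i ∈ range m, x i ^ (if w (i + 1) < w i then 1 else 0) * qnum r (x i) := by
  induction m generalizing x w with
  | zero => simp
  | succ m ih =>
    rw [← (Fin.consEquiv fun _ => Fin r).sum_comp, Fintype.sum_prod_type, sum_comm,
      prod_range_succ', ← ih (fun i => x (i + 1)) (fun i => w (i + 1)), sum_mul]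
    refine sum_congr rfl fun y _ => ?_
    simp only [Fin.consEquiv, Equiv.coe_fn_mk, prod_range_succ' _ m, colorSeq_cons_succ,
      colorSeq_cons_zero]
    rw [← mul_sum, sum_pow_flagStep _ _ (colorSeq_lt hr y 0)]

lemma fmaj_exponent_eq_sum_flagStep {r : ℕ} (hr : 0 < r) (w : ℕ → ℕ) {m : ℕ} (y : Fin m → Fin r) :
    r * seqMaj Flt (m + 1) (fun i => (w i, colorSeq y i)) + ∑ i ∈ range m, colorSeq y i
      = ∑ i ∈ range m,
          (i + 1) * flagStep r (w i, colorSeq y i) (w (i + 1), colorSeq y (i + 1)) := by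
  have h := sum_range_succ_mul_of_add_eq (m := m) (c := colorSeq y)
    (a := fun i => if Flt (w (i + 1), colorSeq y (i + 1)) (w i, colorSeq y i) then r else 0)
    (b := fun i => flagStep r (w i, colorSeq y i) (w (i + 1), colorSeq y (i + 1)))
    (fun i _ => flagStep_add (w i, colorSeq y i) (colorSeq_lt hr y (i + 1)))
  rw [colorSeq, extendByZero_of_le _ le_rfl, ← colorSeq, mul_zero, add_zero] at h
  rw [h, add_comm, seqMaj_succ_eq_sum, mul_sum]
  congr 1
  refine sum_congr rfl fun i _ => ?_
  split_ifs <;> ring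

theorem sum_pow_fmaj_colorSeq {r : ℕ} (hr : 0 < r) (q : ℂ) (w : ℕ → ℕ) (m : ℕ) :
    ∑ y : Fin m → Fin r,
        q ^ (r * seqMaj Flt (m + 1) (fun i => (w i, colorSeq y i)) + ∑ i ∈ range m, colorSeq y i)
      = q ^ seqMaj (· < ·) (m + 1) w * ∏ i ∈ range m, qnum r (q ^ (i + 1)) := by
  simp only [fmaj_exponent_eq_sum_flagStep hr, ← prod_pow_eq_pow_sum, pow_mul]
  rw [sum_prod_pow_flagStep hr m (fun i => q ^ (i + 1)) w, prod_mul_distrib, seqMaj_succ_eq_sum,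
    ← prod_pow_eq_pow_sum]
  simp only [← pow_mul, mul_comm]

/-! ### Colored permutations -/

lemma sum_filter_sum_eq_zero_comp_init {G M : Type*} [AddCommGroup G] [Fintype G] [DecidableEq G]
    [AddCommMonoid M] (m : ℕ) (f : (Fin m → G) → M) :
    ∑ z ∈ univ.filter (fun z : Fin (m + 1) → G => ∑ i, z i = 0), f (Fin.init z) = ∑ y, f y := by
  refine sum_nbij' Fin.init (fun y => Fin.snoc y (-∑ i, y i)) (fun _ _ => mem_univ _)
    (fun y _ => ?_) (fun z hz => ?_) (fun y _ => Fin.init_snoc _ _) (fun _ _ => rfl)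
  · simp [Fin.sum_univ_castSucc]
  · have hz : ∑ i, Fin.init z i + z (Fin.last m) = 0 := by
      rw [← (mem_filter.1 hz).2, Fin.sum_univ_castSucc]; rfl
    rw [← eq_neg_of_add_eq_zero_right hz, Fin.snoc_init_self]

open Fin.CommRing in
lemma sum_val_mod_eq_zero_iff {m r : ℕ} [NeZero r] (z : Fin m → Fin r) :
    (∑ i, (z i : ℕ)) % r = 0 ↔ ∑ i, z i = 0 := by
  rw [← Nat.dvd_iff_mod_eq_zero, ← Fin.natCast_eq_zero, Nat.cast_sum]
  simp only [Fin.cast_val_eq_self]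

lemma getD_map_finRange {α : Type*} {n : ℕ} (f : Fin n → α) (d : α) {j : ℕ} (hj : j < n) :
    ((List.finRange n).map f).getD j d = f ⟨j, hj⟩ := by
  rw [List.getD_eq_getElem _ _ (by simpa using hj)]
  simp

lemma colSum_map_finRange {n : ℕ} (f : Fin n → ℕ × ℕ) :
    colSum ((List.finRange n).map f) = ∑ i, (f i).2 := by
  rw [colSum, List.map_map, Fin.sum_univ_def]
  rfl

lemma colSum_window {r n : ℕ} (π : GP r n) : colSum (window π) = ∑ i, (π.2 i : ℕ) :=
  colSum_map_finRange _

lemma invNum_window {r n : ℕ} (π : GP r n) :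
    invNum (absList (window π)) = seqInv n (extendByZero fun i => (π.1 i : ℕ) + 1) := by
  rw [invNum_eq_seqInv, absList, window, List.map_map, List.length_map, List.length_finRange]
  exact seqInv_congr fun j hj => by rw [getD_map_finRange _ _ hj, extendByZero_of_lt _ hj]; rfl

lemma fmaj_windowD {r m : ℕ} (π : GP r (m + 1)) :
    fmaj r (windowD π)
      = r * seqMaj Flt (m + 1) (fun i => (extendByZero (fun i => (π.1 i : ℕ) + 1) i,
          colorSeq (Fin.init π.2) i)) + ∑ i ∈ range m, colorSeq (Fin.init π.2) i := by
  rw [fmaj, majF_eq_seqMaj, windowD, List.length_map, List.length_finRange, colSum_map_finRange]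
  congr 1
  · refine congrArg (r * ·) (seqMaj_congr fun j hj => ?_)
    rw [getD_map_finRange _ _ hj, extendByZero_of_lt _ hj, colorSeq, Nat.add_sub_cancel]
    congr 1
    by_cases h : j < m
    · rw [if_neg (by simp only; omega), extendByZero_of_lt _ h]; rfl
    · rw [if_pos (by simp only; omega), extendByZero_of_le _ (by omega)]
  · rw [Fin.sum_univ_castSucc, ← Fin.sum_univ_eq_sum_range]
    simp only [Fin.val_last, Fin.val_castSucc, Nat.add_sub_cancel, if_true, add_zero]
    refine sum_congr rfl fun i _ => ?_
    rw [if_neg i.is_lt.ne, colorSeq, extendByZero_of_lt _ i.is_lt]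
    rfl

theorem sum_colorings_pow_fmaj_windowD {r m : ℕ} (hr : 0 < r) (q : ℂ)
    (σ : Equiv.Perm (Fin (m + 1))) :
    ∑ z ∈ univ.filter (fun z : Fin (m + 1) → Fin r => colSum (window (σ, z)) % r = 0),
        q ^ fmaj r (windowD (σ, z))
      = q ^ seqMaj (· < ·) (m + 1) (extendByZero fun i => (σ i : ℕ) + 1)
          * ∏ i ∈ range m, qnum r (q ^ (i + 1)) := by
  have : NeZero r := ⟨hr.ne'⟩
  rw [filter_congr fun z _ => by rw [colSum_window, sum_val_mod_eq_zero_iff]]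
  simp only [fmaj_windowD]
  exact (sum_filter_sum_eq_zero_comp_init m (fun y => q ^ (r * seqMaj Flt (m + 1)
    (fun i => (extendByZero (fun i => (σ i : ℕ) + 1) i, colorSeq y i))
      + ∑ i ∈ range m, colorSeq y i))).trans (sum_pow_fmaj_colorSeq hr q _ m)

lemma prod_Icc_one_eq_prod_range {M : Type*} [CommMonoid M] (f : ℕ → M) (m : ℕ) :
    ∏ j ∈ Icc 1 m, f j = ∏ i ∈ range m, f (i + 1) := by
  rw [← Ico_add_one_right_eq_Icc, range_eq_Ico, prod_Ico_add' f 0 m 1, zero_add]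

/-- the signed `Dmaj` generating function over `G*_{r,n}`. -/
theorem Dmaj_total (r n : ℕ) (ε q : ℂ)
    (hr : 1 ≤ r) (hn : 1 ≤ n) (hε : ε = 1 ∨ ε = -1) :
    ∑ π ∈ Finset.univ.filter
        (fun π : GP r n => colSum (window π) % r = 0),
      ε ^ invNum (absList (window π)) * q ^ fmaj r (windowD π)
    = (∏ j ∈ Finset.Icc 1 (n - 1), qnum (j * r) (ε ^ (j - 1) * q)) *
        qnum n (ε ^ (n - 1) * q) := by
  have hε2 : ε ^ 2 = 1 := by rcases hε with rfl | rfl <;> norm_num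
  obtain ⟨m, rfl⟩ : ∃ m, n = m + 1 := ⟨n - 1, by omega⟩
  calc _ = ∑ σ : Equiv.Perm (Fin (m + 1)),
          invMajWeight ε q (m + 1) (extendByZero fun i => (σ i : ℕ) + 1)
            * ∏ i ∈ range m, qnum r (q ^ (i + 1)) := by
        rw [sum_filter, Fintype.sum_prod_type]
        refine sum_congr rfl fun σ _ => ?_
        rw [invMajWeight, mul_assoc, ← sum_colorings_pow_fmaj_windowD hr q σ, mul_sum, sum_filter]
        refine sum_congr rfl fun z _ => ?_
        rw [invNum_window]
    _ = signedQFactorial ε q (m + 1) * ∏ i ∈ range m, qnum r (q ^ (i + 1)) := by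
        rw [← sum_mul,
          sum_perm_eq_sum_injWords (m + 1) fun w => invMajWeight ε q (m + 1) (extendByZero w),
          sum_invMajWeight_injWords hε2 q (by simp)]
    _ = _ := by
        rw [Nat.add_sub_cancel, prod_Icc_one_eq_prod_range, signedQFactorial_succ, signedQFactorial]
        simp only [qnum_succ_mul hε2, Nat.add_sub_cancel, prod_mul_distrib]
        ring
end
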